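/- arXiv:2408.02204 — 8 statements merged into one kernel-verified Lean document; each statement's English description precedes it below -/
import Mathlib

section
/- Let R be an integral domain containing a field of characteristic p > 0, and let σ be a triangular R-algebra automorphism of R[x1,x2] of order p (σ^p = id, σ ≠ id) with σ(x1) ≠ x1. Then there exist a ∈ R \ {0} and a polynomial θ(x1) ∈ R[x1] all of whose monomials x1^i satisfy p ∤ i, such that σ(x1) = x1 + a and a·(σ(x2) − x2) = θ(x1) − θ(x1 + a) in R[x1]; in particular θ(x1) − θ(x1 + a) is divisible by a in R[x1] and σ(x2) = x2 + a^{−1}(θ(x1) − θ(x1 + a)). -/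
open Polynomial


private lemma taylor_coeff_of_natDegree_le {R : Type*} [CommRing R] (a : R) (f : R[X]) (m : ℕ)
    (h : f.natDegree ≤ m) : (taylor a f).coeff m = f.coeff m := by
  rw [taylor_coeff]
  have h1 : (hasseDeriv m f).natDegree < 1 := by
    refine Nat.lt_succ_of_le (natDegree_le_iff_coeff_eq_zero.mpr fun N hN => ?_)
    rw [hasseDeriv_coeff]
    rw [coeff_eq_zero_of_natDegree_lt (lt_of_le_of_lt h (by omega)), mul_zero]
  rw [eval_eq_sum_range' h1]
  simp [hasseDeriv_coeff]

private lemma taylor_coeff_succ' {R : Type*} [CommRing R] (a : R) (f : R[X]) (n : ℕ)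
    (h : f.natDegree ≤ n + 1) :
    (taylor a f).coeff n = f.coeff n + ((n + 1 : ℕ) : R) * f.coeff (n + 1) * a := by
  rw [taylor_coeff]
  have h1 : (hasseDeriv n f).natDegree < 2 := by
    refine Nat.lt_succ_of_le (natDegree_le_iff_coeff_eq_zero.mpr fun N hN => ?_)
    rw [hasseDeriv_coeff]
    rw [coeff_eq_zero_of_natDegree_lt (lt_of_le_of_lt h (by omega)), mul_zero]
  rw [eval_eq_sum_range' h1]
  rw [Finset.sum_range_succ, Finset.sum_range_one]
  simp [hasseDeriv_coeff, Nat.choose_succ_self_right, add_comm 1 n]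

private lemma Dstep {R : Type*} [CommRing R] (a : R) (f : R[X]) (n : ℕ)
    (h : f.natDegree ≤ n + 1) :
    (((taylor a : Module.End R R[X]) - 1) f).natDegree ≤ n ∧
    (((taylor a : Module.End R R[X]) - 1) f).coeff n
      = ((n + 1 : ℕ) : R) * a * f.coeff (n + 1) := by
  have happ : ((taylor a : Module.End R R[X]) - 1) f = taylor a f - f := by
    simp [LinearMap.sub_apply]
  constructor
  · refine natDegree_le_iff_coeff_eq_zero.mpr fun N hN => ?_
    rw [happ, coeff_sub, taylor_coeff_of_natDegree_le a f N (le_trans h hN), sub_self]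
  · rw [happ, coeff_sub, taylor_coeff_succ' a f n h]
    ring

private lemma Dk {R : Type*} [CommRing R] (a : R) (K : ℕ) :
    ∀ (n : ℕ) (f : R[X]), f.natDegree ≤ n + K →
    ((((taylor a : Module.End R R[X]) - 1) ^ K) f).natDegree ≤ n ∧
    ((((taylor a : Module.End R R[X]) - 1) ^ K) f).coeff n
      = (∏ j ∈ Finset.range K, ((n + K - j : ℕ) : R)) * a ^ K * f.coeff (n + K) := by
  induction K with
  | zero => intro n f hf; simpa using hf
  | succ K IH =>
    intro n f hf
    have hf' : f.natDegree ≤ (n + K) + 1 := by omega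
    have hDf := Dstep a f (n + K) hf'
    have hpow : (((taylor a : Module.End R R[X]) - 1) ^ (K + 1)) f
        = (((taylor a : Module.End R R[X]) - 1) ^ K) (((taylor a : Module.End R R[X]) - 1) f) := by
      rw [pow_succ, Module.End.mul_apply]
    obtain ⟨hIH1, hIH2⟩ := IH n (((taylor a : Module.End R R[X]) - 1) f) hDf.1
    refine ⟨by rw [hpow]; exact hIH1, ?_⟩
    rw [hpow, hIH2, hDf.2, Finset.prod_range_succ']
    have h1 : (∏ j ∈ Finset.range K, ((n + (K + 1) - (j + 1) : ℕ) : R))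
        = ∏ j ∈ Finset.range K, ((n + K - j : ℕ) : R) :=
      Finset.prod_congr rfl fun j hj => by
        have : n + (K + 1) - (j + 1) = n + K - j := by omega
        rw [this]
    have h0 : n + (K + 1) - 0 = (n + K) + 1 := by omega
    have h2 : n + (K + 1) = (n + K) + 1 := by omega
    rw [h1, h0, h2]
    ring

private lemma Tpow {R : Type*} [CommRing R] (a : R) (m : ℕ) (f : R[X]) :
    (((taylor a : Module.End R R[X])) ^ m) f = taylor (m • a) f := by
  induction m with
  | zero => simp [taylor_zero]
  | succ m IH =>
    rw [pow_succ', Module.End.mul_apply, IH, taylor_taylor, succ_nsmul, add_comm]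

private lemma Tpow_p {R : Type*} [CommRing R] (p : ℕ) [CharP R p] (a : R) :
    ((taylor a : Module.End R R[X])) ^ p = 1 := by
  apply LinearMap.ext
  intro f
  rw [Tpow, nsmul_eq_mul, CharP.cast_eq_zero R p, zero_mul, taylor_zero, Module.End.one_apply]

private lemma hgeo {R : Type*} [CommRing R] [IsDomain R] (p : ℕ) [Fact p.Prime] [CharP R p] :
    (∑ m ∈ Finset.range p, (X : R[X]) ^ m) = (X - 1) ^ (p - 1) := by
  have hX : (X - 1 : R[X]) ≠ 0 := by
    rw [← C_1]; exact X_sub_C_ne_zero 1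
  apply mul_left_cancel₀ hX
  have h1 : (X - 1 : R[X]) ^ p = X ^ p - 1 := by
    rw [sub_pow_char, one_pow]
  have h3 : (X - 1 : R[X]) ^ p = (X - 1) * (X - 1) ^ (p - 1) := by
    conv_lhs => rw [show p = (p - 1) + 1 from (Nat.succ_pred_eq_of_pos (Fact.out : p.Prime).pos).symm]
    rw [pow_succ]
    ring
  rw [← h3, h1, mul_comm, geom_sum_mul]

private lemma sum_T_eq {R : Type*} [CommRing R] [IsDomain R] (p : ℕ) [Fact p.Prime] [CharP R p]
    (a : R) :
    (∑ m ∈ Finset.range p, ((taylor a : Module.End R R[X])) ^ m)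
      = ((taylor a : Module.End R R[X]) - 1) ^ (p - 1) := by
  have := congrArg (Polynomial.aeval ((taylor a : Module.End R R[X]))) (hgeo p (R := R))
  simpa using this

private lemma Dpow_p {R : Type*} [CommRing R] [IsDomain R] (p : ℕ) [Fact p.Prime] [CharP R p]
    (a : R) : ((taylor a : Module.End R R[X]) - 1) ^ p = 0 := by
  have h1 : (X - 1 : R[X]) ^ p = X ^ p - 1 := by
    rw [sub_pow_char, one_pow]
  have := congrArg (Polynomial.aeval ((taylor a : Module.End R R[X]))) h1
  simpa [Tpow_p p a] using this

private theorem exists_theta {k R : Type*} [Field k] [CommRing R] [IsDomain R] [Algebra k R]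
    (p : ℕ) [Fact p.Prime] [CharP R p] (a : R) (ha : a ≠ 0) (g : R[X])
    (hg : (((taylor a : Module.End R R[X]) - 1) ^ (p - 1)) g = 0) :
    ∃ θ : R[X], (∀ i : ℕ, p ∣ i → θ.coeff i = 0) ∧ C a * g = θ - taylor a θ := by
  haveI : CharP k p := by
    obtain ⟨q, hq⟩ := CharP.exists k
    haveI := hq
    haveI : CharP R q := charP_of_injective_algebraMap (algebraMap k R).injective q
    have : q = p := CharP.eq R this ‹CharP R p›
    exact this ▸ hq
  suffices H : ∀ (n : ℕ) (g : R[X]), (((taylor a : Module.End R R[X]) - 1) ^ (p - 1)) g = 0 →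
      g.natDegree ≤ n → ∃ θ : R[X], (∀ i : ℕ, p ∣ i → θ.coeff i = 0) ∧ C a * g = θ - taylor a θ by
    exact H g.natDegree g hg le_rfl
  clear hg g
  intro n
  induction n using Nat.strong_induction_on with
  | _ n IH =>
  intro g hg hdeg
  by_cases hg0 : g = 0
  · exact ⟨0, by simp, by simp [hg0]⟩
  set d := g.natDegree with hdd
  set c := g.leadingCoeff with hcc
  have hc : c ≠ 0 := leadingCoeff_ne_zero.mpr hg0
  -- p does not divide d + 1
  have hpd : ¬ p ∣ (d + 1) := by
    have hp2 : 2 ≤ p := (Fact.out : p.Prime).two_le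
    rcases lt_or_ge d (p - 1) with hlt | hge
    · intro hdvd
      have := Nat.le_of_dvd (Nat.succ_pos d) hdvd
      omega
    · obtain ⟨m, hm⟩ := Nat.exists_eq_add_of_le hge
      have hdeg : g.natDegree ≤ m + (p - 1) := by omega
      have hcoe := (Dk a (p - 1) m g hdeg).2
      rw [hg, coeff_zero] at hcoe
      have hmd : m + (p - 1) = d := by omega
      have hmc : g.coeff (m + (p - 1)) = c := by
        rw [hmd, hdd, hcc, leadingCoeff]
      rw [hmc] at hcoe
      have hprod : (∏ j ∈ Finset.range (p - 1), ((m + (p - 1) - j : ℕ) : R)) = 0 := by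
        rcases mul_eq_zero.mp hcoe.symm with h | h
        · rcases mul_eq_zero.mp h with h' | h'
          · exact h'
          · exact absurd h' (pow_ne_zero _ ha)
        · exact absurd h hc
      obtain ⟨j, hj, hj0⟩ := Finset.prod_eq_zero_iff.mp hprod
      have hjlt : j < p - 1 := Finset.mem_range.mp hj
      have hdvd : p ∣ (m + (p - 1) - j) := (CharP.cast_eq_zero_iff R p _).mp hj0
      intro hdvd'
      have h2 : p ∣ ((d + 1) - (m + (p - 1) - j)) := Nat.dvd_sub hdvd' hdvd
      have h3 : (d + 1) - (m + (p - 1) - j) = j + 1 := by omega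
      rw [h3] at h2
      have := Nat.le_of_dvd (Nat.succ_pos j) h2
      omega
  -- invertibility of d+1
  have hk1 : ((d + 1 : ℕ) : k) ≠ 0 := by
    rw [Ne, CharP.cast_eq_zero_iff k p]; exact hpd
  set w : R := algebraMap k R (((d + 1 : ℕ) : k)⁻¹) with hww
  have hw : ((d + 1 : ℕ) : R) * w = 1 := by
    rw [hww, ← map_natCast (algebraMap k R) (d + 1), ← map_mul,
      mul_inv_cancel₀ hk1, map_one]
  -- the polynomial s
  set s : R[X] := ∑ i ∈ Finset.range (d + 1), C (a ^ (d - i) * ((d + 1).choose i : R)) * X ^ i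
    with hss
  have hs : (X + C a) ^ (d + 1) = X ^ (d + 1) + C a * s := by
    rw [add_pow, Finset.sum_range_succ, Finset.mul_sum]
    rw [Nat.sub_self, pow_zero, Nat.choose_self, Nat.cast_one, mul_one, mul_one, add_comm]
    congr 1
    refine Finset.sum_congr rfl fun i hi => ?_
    have hi' : d + 1 - i = (d - i) + 1 := by
      have := Finset.mem_range.mp hi; omega
    rw [hi', map_mul, map_natCast C, pow_succ, ← C_pow]
    ring
  have hscoeff : s.coeff d = ((d + 1 : ℕ) : R) := by
    rw [hss, finset_sum_coeff]
    rw [Finset.sum_eq_single d]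
    · rw [coeff_C_mul, coeff_X_pow, if_pos rfl, mul_one, Nat.sub_self, pow_zero, one_mul,
        Nat.choose_succ_self_right]
    · intro i hi hne
      rw [coeff_C_mul, coeff_X_pow, if_neg (Ne.symm hne), mul_zero]
    · intro hd'
      exact absurd (Finset.self_mem_range_succ d) hd'
  have hsdeg : s.natDegree ≤ d := by
    refine natDegree_le_iff_coeff_eq_zero.mpr fun N hN => ?_
    rw [hss, finset_sum_coeff]
    refine Finset.sum_eq_zero fun i hi => ?_
    have : N ≠ i := by have := Finset.mem_range.mp hi; omega
    rw [coeff_C_mul, coeff_X_pow, if_neg this, mul_zero]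
  -- θ₁ and g'
  set θ₁ : R[X] := -(C (c * w) * X ^ (d + 1)) with hθ₁
  have key1 : θ₁ - taylor a θ₁ = C a * (C (c * w) * s) := by
    have ht : taylor a θ₁ = -(C (c * w) * (X + C a) ^ (d + 1)) := by
      rw [hθ₁, taylor_apply]
      simp [mul_comp]
    rw [ht, hθ₁, hs]
    ring
  set g' : R[X] := g - C (c * w) * s with hgg'
  have hCag' : C a * g' = C a * g - (θ₁ - taylor a θ₁) := by
    rw [key1, hgg']; ring
  have hg'coeffd : g'.coeff d = 0 := by
    rw [hgg', coeff_sub, coeff_C_mul, hscoeff]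
    have : c * w * ((d + 1 : ℕ) : R) = c := by
      rw [mul_assoc, mul_comm w, hw, mul_one]
    rw [this, hdd, ← leadingCoeff, ← hcc, sub_self]
  have hg'deg : g'.natDegree ≤ d := by
    refine le_trans (natDegree_sub_le _ _) (max_le le_rfl ?_)
    exact le_trans (natDegree_C_mul_le _ _) hsdeg
  -- D^{p-1} g' = 0
  have hDg' : (((taylor a : Module.End R R[X]) - 1) ^ (p - 1)) g' = 0 := by
    have hsm : ∀ f : R[X], (((taylor a : Module.End R R[X]) - 1) ^ (p - 1)) (C a * f)
        = C a * ((((taylor a : Module.End R R[X]) - 1) ^ (p - 1)) f) := by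
      intro f
      rw [← smul_eq_C_mul, map_smul, smul_eq_C_mul]
    have hker : (((taylor a : Module.End R R[X]) - 1) ^ (p - 1)) (C a * g') = 0 := by
      rw [hCag', map_sub, hsm g, hg, mul_zero, zero_sub, neg_eq_zero]
      have hD1 : θ₁ - taylor a θ₁ = -(((taylor a : Module.End R R[X]) - 1) θ₁) := by
        simp [LinearMap.sub_apply]
      rw [hD1, map_neg, neg_eq_zero, ← Module.End.mul_apply, ← pow_succ]
      have hpp : (p - 1) + 1 = p := Nat.succ_pred_eq_of_pos (Fact.out : p.Prime).pos
      rw [hpp, Dpow_p p a, LinearMap.zero_apply]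
    rw [hsm g'] at hker
    rcases mul_eq_zero.mp hker with h | h
    · exact absurd h (by simpa using ha)
    · exact h
  -- θ₁ coefficient property
  have hθ₁coeff : ∀ i : ℕ, p ∣ i → θ₁.coeff i = 0 := by
    intro i hi
    rw [hθ₁, coeff_neg, coeff_C_mul, coeff_X_pow]
    have : i ≠ d + 1 := fun h => hpd (h ▸ hi)
    rw [if_neg this, mul_zero, neg_zero]
  by_cases hg'0 : g' = 0
  · refine ⟨θ₁, hθ₁coeff, ?_⟩
    have h0 := hCag'
    rw [hg'0, mul_zero] at h0
    exact (sub_eq_zero.mp h0.symm)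
  · have hg'ltd : g'.natDegree < d := by
      refine lt_of_le_of_ne hg'deg fun h => ?_
      have := leadingCoeff_ne_zero.mpr hg'0
      rw [leadingCoeff, h, hg'coeffd] at this
      exact this rfl
    have hg'lt : g'.natDegree < n := lt_of_lt_of_le hg'ltd hdeg
    obtain ⟨θ', hθ'coeff, hθ'eq⟩ := IH g'.natDegree hg'lt g' hDg' le_rfl
    refine ⟨θ₁ + θ', fun i hi => by rw [coeff_add, hθ₁coeff i hi, hθ'coeff i hi, add_zero], ?_⟩
    rw [map_add]
    have : θ₁ + θ' - (taylor a θ₁ + taylor a θ') = (θ₁ - taylor a θ₁) + (θ' - taylor a θ') := by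
      ring
    rw [this, key1, ← hθ'eq, hgg']
    ring

private lemma lin_eq_X {R : Type*} [CommRing R] {b e : R}
    (h : Polynomial.C b * Polynomial.X + Polynomial.C e = Polynomial.X) : b = 1 ∧ e = 0 := by
  constructor
  · have := congrArg (fun q => Polynomial.coeff q 1) h
    simpa using this
  · have := congrArg (fun q => Polynomial.coeff q 0) h
    simpa using this

/-- An `R`-algebra automorphism of `R[x₁,…,xₙ]` is triangular if
`σ(xᵢ) ∈ R^× xᵢ + R[x₁,…,x_{i-1}]` for each `i`. -/
def IsTriangular {R : Type*} [CommRing R] {n : ℕ}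
    (σ : MvPolynomial (Fin n) R ≃ₐ[R] MvPolynomial (Fin n) R) : Prop :=
  ∀ i : Fin n, ∃ (u : Rˣ) (h : MvPolynomial (Fin n) R),
    h ∈ MvPolynomial.supported R {j : Fin n | (j : ℕ) < (i : ℕ)} ∧
    σ (MvPolynomial.X i) = MvPolynomial.C (u : R) * MvPolynomial.X i + h

/-- for a triangular automorphism `σ` of `R[x₁,x₂]` of order `p`
with `σ(x₁) ≠ x₁`, there are `a ∈ R \ {0}` and `θ ∈ Σ_{p ∤ i} R x₁^i` with
`σ(x₁) = x₁ + a` and `a·(σ(x₂) − x₂) = θ(x₁) − θ(x₁ + a)`. -/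
theorem stmt1 {k R : Type*} [Field k] [CommRing R] [IsDomain R] [Algebra k R]
    (p : ℕ) [Fact p.Prime] [CharP R p]
    (σ : MvPolynomial (Fin 2) R ≃ₐ[R] MvPolynomial (Fin 2) R)
    (htri : IsTriangular σ) (hp : σ ^ p = 1) (hne : σ ≠ 1)
    (hx1 : σ (MvPolynomial.X 0) ≠ MvPolynomial.X 0) :
    ∃ (a : R) (θ : Polynomial R), a ≠ 0 ∧ (∀ i : ℕ, p ∣ i → θ.coeff i = 0) ∧
      σ (MvPolynomial.X 0) = MvPolynomial.X 0 + MvPolynomial.C a ∧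
      MvPolynomial.C a * (σ (MvPolynomial.X 1) - MvPolynomial.X 1)
        = Polynomial.aeval (MvPolynomial.X 0 : MvPolynomial (Fin 2) R) θ
          - Polynomial.aeval (MvPolynomial.X 0 + MvPolynomial.C a : MvPolynomial (Fin 2) R) θ := by
  classical
  obtain ⟨u, h, hmem, h0⟩ := htri 0
  obtain ⟨v, h₁, hmem1, h1⟩ := htri 1
  -- σ fixes constants
  have hσC : ∀ (τ : MvPolynomial (Fin 2) R ≃ₐ[R] MvPolynomial (Fin 2) R) (r : R),
      τ (MvPolynomial.C r) = MvPolynomial.C r := fun τ r => by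
    rw [← MvPolynomial.algebraMap_eq]; exact τ.commutes r
  -- h is a constant
  have hset0 : {j : Fin 2 | (j : ℕ) < ((0 : Fin 2) : ℕ)} = (∅ : Set (Fin 2)) := by
    ext j; simp
  rw [hset0, MvPolynomial.supported_empty, Algebra.mem_bot] at hmem
  obtain ⟨cc, rfl⟩ := hmem
  rw [MvPolynomial.algebraMap_eq] at h0
  -- iterates on X 0
  have hσn0 : ∀ n : ℕ, ∃ e : R,
      (σ ^ n) (MvPolynomial.X 0) = MvPolynomial.C ((u : R) ^ n) * MvPolynomial.X 0
        + MvPolynomial.C e := by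
    intro n
    induction n with
    | zero => exact ⟨0, by simp⟩
    | succ n IHn =>
      obtain ⟨e, he⟩ := IHn
      refine ⟨(u : R) ^ n * cc + e, ?_⟩
      rw [pow_succ', AlgEquiv.mul_apply, he, map_add, map_mul, hσC, hσC, h0]
      simp only [map_add, map_mul, map_pow]
      ring
  -- u = 1
  have hu1 : (u : R) = 1 := by
    obtain ⟨e, he⟩ := hσn0 p
    rw [hp, AlgEquiv.one_apply] at he
    have h2 := congrArg (MvPolynomial.aeval (R := R) ![Polynomial.X, (0 : Polynomial R)]) he.symm
    simp only [map_add, map_mul, MvPolynomial.aeval_X, MvPolynomial.aeval_C,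
      Matrix.cons_val_zero, Polynomial.algebraMap_eq] at h2
    have hup : (u : R) ^ p = 1 := (lin_eq_X h2).1
    have h3 : ((u : R) - 1) ^ p = 0 := by rw [sub_pow_char, hup, one_pow, sub_self]
    have h4 := pow_eq_zero_iff (Fact.out : p.Prime).ne_zero |>.mp h3
    exact sub_eq_zero.mp h4
  rw [hu1, map_one, one_mul] at h0
  -- cc ≠ 0
  have hcc0 : cc ≠ 0 := by
    intro hcz
    rw [hcz, map_zero, add_zero] at h0
    exact hx1 h0
  -- h₁ is a polynomial in X 0
  have hset1 : {j : Fin 2 | (j : ℕ) < ((1 : Fin 2) : ℕ)} = ({0} : Set (Fin 2)) := by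
    ext j; fin_cases j <;> simp
  rw [hset1, MvPolynomial.supported_eq_adjoin_X, Set.image_singleton,
    Algebra.adjoin_singleton_eq_range_aeval, AlgHom.mem_range] at hmem1
  obtain ⟨g₀, rfl⟩ := hmem1
  -- composition with taylor
  have htay : ∀ q : R[X],
      Polynomial.aeval (MvPolynomial.X 0 + MvPolynomial.C cc : MvPolynomial (Fin 2) R) q
        = Polynomial.aeval (MvPolynomial.X 0 : MvPolynomial (Fin 2) R) (taylor cc q) := by
    intro q
    rw [taylor_apply, Polynomial.aeval_comp]
    congr 1
    rw [map_add, Polynomial.aeval_X, Polynomial.aeval_C, MvPolynomial.algebraMap_eq]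
  have hcomp : ∀ q : R[X],
      σ (Polynomial.aeval (MvPolynomial.X 0 : MvPolynomial (Fin 2) R) q)
        = Polynomial.aeval (MvPolynomial.X 0 : MvPolynomial (Fin 2) R) (taylor cc q) := by
    intro q
    rw [← Polynomial.aeval_algHom_apply σ (MvPolynomial.X 0) q, h0, htay]
  -- iterates on X 1, phase 1
  have hσn1 : ∀ n : ℕ, ∃ q : R[X],
      (σ ^ n) (MvPolynomial.X 1) = MvPolynomial.C ((v : R) ^ n) * MvPolynomial.X 1
        + Polynomial.aeval (MvPolynomial.X 0 : MvPolynomial (Fin 2) R) q := by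
    intro n
    induction n with
    | zero => exact ⟨0, by simp⟩
    | succ n IHn =>
      obtain ⟨q, hq⟩ := IHn
      refine ⟨Polynomial.C ((v : R) ^ n) * g₀ + taylor cc q, ?_⟩
      rw [pow_succ', AlgEquiv.mul_apply, hq, map_add, map_mul, hσC, h1, hcomp]
      rw [map_add, map_mul, Polynomial.aeval_C, MvPolynomial.algebraMap_eq]
      simp only [map_add, map_mul, map_pow]
      ring
  -- v = 1
  have hv1 : (v : R) = 1 := by
    obtain ⟨q, hq⟩ := hσn1 p
    rw [hp, AlgEquiv.one_apply] at hq
    have h2 := congrArg (MvPolynomial.aeval (R := R) ![(0 : Polynomial R), Polynomial.X]) hq.symm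
    rw [map_add, map_mul,
      ← Polynomial.aeval_algHom_apply (MvPolynomial.aeval ![(0 : Polynomial R), Polynomial.X])
        (MvPolynomial.X 0) q] at h2
    simp only [MvPolynomial.aeval_X, MvPolynomial.aeval_C, Matrix.cons_val_zero,
      Matrix.cons_val_one, Matrix.head_cons, Polynomial.algebraMap_eq] at h2
    rw [Polynomial.aeval_def, Polynomial.eval₂_at_zero, Polynomial.algebraMap_eq] at h2
    have hvp : (v : R) ^ p = 1 := (lin_eq_X h2).1
    have h3 : ((v : R) - 1) ^ p = 0 := by rw [sub_pow_char, hvp, one_pow, sub_self]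
    have h4 := pow_eq_zero_iff (Fact.out : p.Prime).ne_zero |>.mp h3
    exact sub_eq_zero.mp h4
  rw [hv1, map_one, one_mul] at h1
  -- iterates on X 1, phase 2
  have hσn1' : ∀ n : ℕ,
      (σ ^ n) (MvPolynomial.X 1) = MvPolynomial.X 1
        + Polynomial.aeval (MvPolynomial.X 0 : MvPolynomial (Fin 2) R)
          (∑ m ∈ Finset.range n, (((taylor cc : Module.End R (Polynomial R))) ^ m) g₀) := by
    intro n
    induction n with
    | zero => simp
    | succ n IHn =>
      rw [pow_succ', AlgEquiv.mul_apply, IHn, map_add, h1, hcomp, Finset.sum_range_succ']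
      have hstep : ∀ m : ℕ, (((taylor cc : Module.End R (Polynomial R))) ^ (m + 1)) g₀
          = taylor cc ((((taylor cc : Module.End R (Polynomial R))) ^ m) g₀) := fun m => by
        rw [pow_succ', Module.End.mul_apply]
      simp only [hstep, pow_zero, Module.End.one_apply, map_sum, map_add]
      ring
  -- the sum condition
  have hS0 : (∑ m ∈ Finset.range p, (((taylor cc : Module.End R (Polynomial R))) ^ m) g₀) = 0 := by
    have h3 := hσn1' p
    rw [hp, AlgEquiv.one_apply] at h3
    have h4 : Polynomial.aeval (MvPolynomial.X 0 : MvPolynomial (Fin 2) R)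
        (∑ m ∈ Finset.range p, (((taylor cc : Module.End R (Polynomial R))) ^ m) g₀) = 0 :=
      (left_eq_add.mp h3)
    have h5 := congrArg (MvPolynomial.aeval (R := R) ![Polynomial.X, (0 : Polynomial R)]) h4
    rw [← Polynomial.aeval_algHom_apply (MvPolynomial.aeval ![Polynomial.X, (0 : Polynomial R)])
      (MvPolynomial.X 0)] at h5
    simpa [Polynomial.aeval_X_left_apply] using h5
  have hDg₀ : (((taylor cc : Module.End R (Polynomial R)) - 1) ^ (p - 1)) g₀ = 0 := by
    rw [← sum_T_eq p cc, LinearMap.sum_apply]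
    simpa using hS0
  obtain ⟨θ, hθcoeff, hθeq⟩ := exists_theta (k := k) p cc hcc0 g₀ hDg₀
  refine ⟨cc, θ, hcc0, hθcoeff, h0, ?_⟩
  rw [h1, add_sub_cancel_left]
  have hCmul : (MvPolynomial.C cc : MvPolynomial (Fin 2) R)
      * Polynomial.aeval (MvPolynomial.X 0 : MvPolynomial (Fin 2) R) g₀
      = Polynomial.aeval (MvPolynomial.X 0 : MvPolynomial (Fin 2) R) (Polynomial.C cc * g₀) := by
    rw [map_mul, Polynomial.aeval_C, MvPolynomial.algebraMap_eq]
  rw [hCmul, hθeq, map_sub, htay]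
end

section
/- Let R be an integral domain containing a field of characteristic p > 0, let a ∈ R \ {0}, and let τ be the R-algebra automorphism of the polynomial ring R[x] defined by τ(x) = x + a. Then the fixed ring {f ∈ R[x] : τ(f) = f} equals the subring R[x^p − a^{p−1} x]. -/
open Polynomial

section aux

variable {R : Type*} [CommRing R] [IsDomain R]

private lemma tau_natDegree (a : R) (g : R[X]) :
    (g.comp (X + C a)).natDegree = g.natDegree := by
  rw [natDegree_comp, natDegree_X_add_C, mul_one]

private lemma fixed_small {p : ℕ} [Fact p.Prime] [CharP R p] {a : R} (ha : a ≠ 0) :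
    ∀ n : ℕ, ∀ r : R[X], r.natDegree = n → r.comp (X + C a) = r → r.natDegree < p →
      r.natDegree = 0 := by
  intro n
  induction n using Nat.strong_induction_on with
  | _ n IH =>
    intro r hn hfix hlt
    match n, hn with
    | 0, hn => exact hn
    | (m+1), hn =>
      exfalso
      have hr0 : r ≠ 0 := by
        intro h; rw [h, natDegree_zero] at hn; omega
      have hdfix : (derivative r).comp (X + C a) = derivative r := by
        have := congrArg derivative hfix
        rwa [derivative_comp, derivative_add, derivative_X, derivative_C, add_zero,
          one_mul] at this
      have hlead : r.coeff (m + 1) ≠ 0 := by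
        rw [← hn]; exact mt leadingCoeff_eq_zero.mp hr0
      have hmne : ((m : R) + 1) ≠ 0 := by
        have hnd : ¬ (p ∣ (m + 1)) := by
          intro hdvd
          have := Nat.le_of_dvd (Nat.succ_pos m) hdvd
          omega
        have := (CharP.cast_eq_zero_iff R p (m + 1)).not.mpr hnd
        push_cast at this
        exact this
      have hcd : (derivative r).coeff m ≠ 0 := by
        rw [coeff_derivative]
        exact mul_ne_zero hlead hmne
      have hne0 : r.natDegree ≠ 0 := by rw [hn]; exact Nat.succ_ne_zero m
      have hdlt : (derivative r).natDegree < m + 1 := by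
        rw [← hn]; exact natDegree_derivative_lt hne0
      have hd0 : (derivative r).natDegree = 0 :=
        IH (derivative r).natDegree (by omega) _ rfl hdfix (by omega)
      have hmle : m ≤ (derivative r).natDegree := le_natDegree_of_ne_zero hcd
      have hm0 : m = 0 := by omega
      subst hm0
      have hr : r = C (r.coeff 1) * X + C (r.coeff 0) :=
        eq_X_add_C_of_natDegree_le_one (by omega)
      have heval : r.eval a = r.eval 0 := by
        have := congrArg (eval 0) hfix
        rwa [eval_comp, eval_add, eval_X, eval_C, zero_add] at this
      rw [hr] at heval
      simp only [eval_add, eval_mul, eval_C, eval_X, mul_zero, zero_add] at heval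
      have hz : r.coeff 1 * a = 0 := by linear_combination heval
      rcases mul_eq_zero.mp hz with h | h
      · exact hlead h
      · exact ha h

end aux

/-- for an integral domain `R` containing a field of characteristic
`p > 0` and `a ∈ R \ {0}`, the fixed ring of the automorphism `τ : f(x) ↦ f(x + a)`
of `R[x]` is the subring `R[x^p − a^{p−1} x]`. -/
theorem stmt3 {k R : Type*} [Field k] [CommRing R] [IsDomain R] [Algebra k R]
    (p : ℕ) [Fact p.Prime] [CharP R p]
    (a : R) (ha : a ≠ 0) :
    ∀ f : Polynomial R,
      f.comp (Polynomial.X + Polynomial.C a) = f ↔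
        f ∈ Algebra.adjoin R
          {(Polynomial.X : Polynomial R) ^ p - Polynomial.C (a ^ (p - 1)) * Polynomial.X} := by
  have hp := (Fact.out : p.Prime)
  set u : R[X] := X ^ p - C (a ^ (p - 1)) * X with hu_def
  have hp1 : 1 ≤ p := hp.one_lt.le.trans' (by omega)
  have hCdeg : (C (a ^ (p - 1)) * X : R[X]).degree < (X ^ p : R[X]).degree := by
    rw [degree_X_pow]
    calc (C (a ^ (p - 1)) * X : R[X]).degree
        ≤ 0 + 1 := (degree_mul_le _ _).trans (add_le_add degree_C_le degree_X_le)
      _ = 1 := by norm_num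
      _ < (p : WithBot ℕ) := by exact_mod_cast Nat.one_lt_cast.mpr hp.one_lt
  have hu_monic : u.Monic := (monic_X_pow p).sub_of_left hCdeg
  have hu_deg : u.natDegree = p := by
    have hnd : (C (a ^ (p - 1)) * X : R[X]).natDegree < (X ^ p : R[X]).natDegree := by
      rcases eq_or_ne (C (a ^ (p - 1)) * X : R[X]) 0 with h | h
      · rw [h, natDegree_zero, natDegree_X_pow]; omega
      · exact natDegree_lt_natDegree h hCdeg
    rw [hu_def, natDegree_sub_eq_left_of_natDegree_lt hnd, natDegree_X_pow]
  have hu_fix : u.comp (X + C a) = u := by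
    have hfrob : ((X : R[X]) + C a) ^ p = X ^ p + (C a) ^ p := add_pow_char _ _ _
    rw [hu_def, sub_comp, pow_comp, X_comp, mul_comp, C_comp, X_comp, hfrob, ← C_pow]
    have hap : a ^ (p - 1) * a = a ^ p := by
      rw [← pow_succ]
      congr 1
      omega
    rw [mul_add, ← C_mul, hap]
    ring
  intro f
  constructor
  · -- forward: fixed → in adjoin
    have main : ∀ n : ℕ, ∀ f : R[X], f.natDegree = n → f.comp (X + C a) = f →
        f ∈ Algebra.adjoin R {u} := by
      intro n
      induction n using Nat.strong_induction_on with
      | _ n IH =>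
        intro f hn hfix
        by_cases hsmall : f.natDegree < p
        · have h0 : f.natDegree = 0 := fixed_small ha f.natDegree f rfl hfix hsmall
          rw [eq_C_of_natDegree_eq_zero h0]
          exact Subalgebra.algebraMap_mem _ _
        · push_neg at hsmall
          have hf0 : f ≠ 0 := by
            intro h
            rw [h, natDegree_zero] at hsmall
            omega
          set q := f /ₘ u with hq
          set r := f %ₘ u with hr
          have hdiv : r + u * q = f := modByMonic_add_div f u
          have hrdeg : r.degree < u.degree := degree_modByMonic_lt f hu_monic
          have htau : r.comp (X + C a) + u * q.comp (X + C a) = f := by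
            have := congrArg (fun g => g.comp (X + C a)) hdiv
            simpa only [add_comp, mul_comp, hu_fix, hfix] using this
          have hrdeg' : (r.comp (X + C a)).degree < u.degree := by
            rcases eq_or_ne r 0 with h | h
            · simpa [h] using hrdeg
            · have hc0 : r.comp (X + C a) ≠ 0 := comp_X_add_C_ne_zero_iff.mpr h
              rw [degree_eq_natDegree hc0, tau_natDegree, ← degree_eq_natDegree h]
              exact hrdeg
          obtain ⟨hq_eq, hr_eq⟩ :=
            div_modByMonic_unique (q.comp (X + C a)) (r.comp (X + C a)) hu_monic
              ⟨htau, hrdeg'⟩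
          have hqfix : q.comp (X + C a) = q := hq_eq.symm
          have hrfix : r.comp (X + C a) = r := hr_eq.symm
          -- r is constant
          have hrlt : r.natDegree < p := by
            rcases eq_or_ne r 0 with h | h
            · rw [h, natDegree_zero]; omega
            · rw [← hu_deg]; exact natDegree_lt_natDegree h hrdeg
          have hr0 : r.natDegree = 0 := fixed_small ha r.natDegree r rfl hrfix hrlt
          -- q has smaller degree
          have hqdeg : q.natDegree < n := by
            have h1 : q.natDegree = f.natDegree - u.natDegree :=
              natDegree_divByMonic f hu_monic
            rw [hu_deg] at h1
            omega
          have hqmem : q ∈ Algebra.adjoin R {u} := IH q.natDegree hqdeg q rfl hqfix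
          rw [← hdiv]
          refine add_mem ?_ (mul_mem (Algebra.self_mem_adjoin_singleton R u) hqmem)
          rw [eq_C_of_natDegree_eq_zero hr0]
          exact Subalgebra.algebraMap_mem _ _
    exact fun hfix => main f.natDegree f rfl hfix
  · intro hmem
    induction hmem using Algebra.adjoin_induction with
    | mem x hx =>
      simp only [Set.mem_singleton_iff] at hx
      rw [hx]; exact hu_fix
    | algebraMap r => simp [algebraMap_eq]
    | add x y _ _ hx hy => rw [add_comp, hx, hy]
    | mul x y _ _ hx hy => rw [mul_comp, hx, hy]
end

section
/- Let R be an integral domain containing a field, and let E be a Ga-action on the polynomial ring R[x] over R (i.e., R ⊆ R[x]^E). Then λ(T) := E(x) − x, a priori an element of R[x][T], in fact lies in R[T], and λ is additive: λ(T1 + T2) = λ(T1) + λ(T2) holds in the polynomial ring in two variables T1, T2 over R. -/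
open Polynomial

noncomputable section Stmt4Aux

variable {R : Type*} [CommRing R]

theorem ringHom_ext2 {S : Type*} [Semiring S]
    {f g : Polynomial (Polynomial R) →+* S}
    (h1 : ∀ r : R, f (C (C r)) = g (C (C r)))
    (h2 : f (C X) = g (C X))
    (h3 : f X = g X) : f = g := by
  refine Polynomial.ringHom_ext (fun a => ?_) h3
  have h : f.comp (C : Polynomial R →+* Polynomial (Polynomial R)) =
      g.comp (C : Polynomial R →+* Polynomial (Polynomial R)) :=
    Polynomial.ringHom_ext (fun r => by simpa using h1 r) (by simpa using h2)
  exact DFunLike.congr_fun h a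

/-- swap of the two variables -/
def sw : Polynomial (Polynomial R) →+* Polynomial (Polynomial R) :=
  eval₂RingHom (mapRingHom (C : R →+* Polynomial R)) (C X)

@[simp] theorem sw_C (p : Polynomial R) : sw (C p) = p.map C := by
  simp [sw, coe_eval₂RingHom]
@[simp] theorem sw_CC (r : R) : sw (C (C r)) = C (C r) := by
  simp [sw, coe_eval₂RingHom]
@[simp] theorem sw_CX : sw (C (X : Polynomial R)) = X := by
  simp [sw, coe_eval₂RingHom]
@[simp] theorem sw_X : sw (X : Polynomial (Polynomial R)) = C X := by
  simp [sw, coe_eval₂RingHom]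

theorem sw_sw : (sw : Polynomial (Polynomial R) →+* _).comp sw = RingHom.id _ := by
  apply ringHom_ext2 <;> simp

/-- `T₁ ↦ T₁ + T₂` -/
def tau : Polynomial R →+* Polynomial (Polynomial R) :=
  eval₂RingHom (C.comp C) (C X + X)

@[simp] theorem tau_C (r : R) : tau (C r) = C (C r) := by simp [tau, coe_eval₂RingHom]
@[simp] theorem tau_X : tau (X : Polynomial R) = C X + X := by simp [tau, coe_eval₂RingHom]

/-- `T₁ ↦ T₂` -/
def sigma : Polynomial R →+* Polynomial (Polynomial R) :=
  eval₂RingHom (C.comp C) X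

@[simp] theorem sigma_C (r : R) : sigma (C r) = C (C r) := by simp [sigma, coe_eval₂RingHom]
@[simp] theorem sigma_X : sigma (X : Polynomial R) = X := by simp [sigma, coe_eval₂RingHom]

def chi2 : Polynomial R →+* Polynomial (Polynomial (Polynomial R)) :=
  mapRingHom ((C.comp C : R →+* Polynomial (Polynomial R)))

@[simp] theorem chi2_C (r : R) : chi2 (C r) = C (C (C r)) := by simp [chi2]
@[simp] theorem chi2_X : chi2 (X : Polynomial R) = X := by simp [chi2]

def chi1 : Polynomial (Polynomial R) →+* Polynomial (Polynomial (Polynomial R)) :=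
  eval₂RingHom (S := Polynomial (Polynomial (Polynomial R))) chi2 (C (C X))

@[simp] theorem chi1_C (a : Polynomial R) : chi1 (C a) = chi2 a := by
  simp [chi1, coe_eval₂RingHom]
@[simp] theorem chi1_X : chi1 (X : Polynomial (Polynomial R)) = C (C X) := by
  simp [chi1, coe_eval₂RingHom]

/-- triple swap -/
def chi : Polynomial (Polynomial (Polynomial R)) →+* Polynomial (Polynomial (Polynomial R)) :=
  eval₂RingHom (S := Polynomial (Polynomial (Polynomial R))) chi1 (C X)

@[simp] theorem chi_C (a : Polynomial (Polynomial R)) : chi (C a) = chi1 a := by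
  simp [chi, coe_eval₂RingHom]
@[simp] theorem chi_X : chi (X : Polynomial (Polynomial (Polynomial R))) = C X := by
  simp [chi, coe_eval₂RingHom]

def mu : Polynomial (Polynomial R) →+* Polynomial (Polynomial (Polynomial R)) :=
  mapRingHom (mapRingHom (C : R →+* Polynomial R))

@[simp] theorem mu_C (a : Polynomial R) : mu (C a) = C (a.map C) := by simp [mu]
@[simp] theorem mu_CC (r : R) : mu (C (C r)) = C (C (C r)) := by simp [mu]
@[simp] theorem mu_CX : mu (C (X : Polynomial R)) = C X := by simp [mu]
@[simp] theorem mu_X : mu (X : Polynomial (Polynomial R)) = X := by simp [mu]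

def rho : R →+* Polynomial (Polynomial (Polynomial R)) :=
  (C.comp C).comp (C : R →+* Polynomial R)

theorem chi_comp_subst :
    (chi : _ →+* _).comp (eval₂RingHom (S := Polynomial (Polynomial (Polynomial R))) ((C.comp C) : Polynomial R →+* _) (C X + X)) =
      ((mapRingHom (tau : Polynomial R →+* _)).comp (sw : Polynomial (Polynomial R) →+* _)) := by
  apply ringHom_ext2 <;> simp [coe_eval₂RingHom]

theorem chi1_eq : (chi1 : Polynomial (Polynomial R) →+* _) =
    (mapRingHom (C : Polynomial R →+* Polynomial (Polynomial R))).comp sw := by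
  apply ringHom_ext2 <;> simp

theorem ev0_comp_sw :
    (mapRingHom (evalRingHom (0 : R))).comp (sw : Polynomial (Polynomial R) →+* _) =
      evalRingHom (0 : Polynomial R) := by
  apply ringHom_ext2 <;> simp

theorem ev0_comp_tau :
    (evalRingHom (0 : Polynomial R)).comp (tau : Polynomial R →+* _) = RingHom.id _ := by
  apply Polynomial.ringHom_ext <;> simp

theorem tau_injective : Function.Injective (tau : Polynomial R →+* _) := by
  intro a b h
  have := congrArg (evalRingHom (0 : Polynomial R)) h
  simpa using (DFunLike.congr_fun ev0_comp_tau a).symm.trans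
    (this.trans (DFunLike.congr_fun ev0_comp_tau b))

theorem evX_comp_sigma :
    (evalRingHom (X : Polynomial R)).comp (sigma : Polynomial R →+* _) = RingHom.id _ := by
  apply Polynomial.ringHom_ext <;> simp

theorem sigma_injective : Function.Injective (sigma : Polynomial R →+* _) := by
  intro a b h
  have := congrArg (evalRingHom (X : Polynomial R)) h
  simpa using (DFunLike.congr_fun evX_comp_sigma a).symm.trans
    (this.trans (DFunLike.congr_fun evX_comp_sigma b))

theorem psi_comp_tau :
    (evalRingHom (-X : Polynomial R)).comp (tau : Polynomial R →+* _) =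
      (C : R →+* Polynomial R).comp (evalRingHom (0 : R)) := by
  apply Polynomial.ringHom_ext <;> simp

theorem mu_comp_tau : (mu : _ →+* _).comp (tau : Polynomial R →+* _) =
    eval₂RingHom (S := Polynomial (Polynomial (Polynomial R))) (rho : R →+* _) (C X + X) := by
  apply Polynomial.ringHom_ext <;> simp [rho, coe_eval₂RingHom]

theorem mu_comp_C : (mu : _ →+* _).comp (C : Polynomial R →+* _) =
    eval₂RingHom (S := Polynomial (Polynomial (Polynomial R))) (rho : R →+* _) (C X) := by
  apply Polynomial.ringHom_ext <;> simp [rho, coe_eval₂RingHom]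

theorem mu_comp_sigma : (mu : _ →+* _).comp (sigma : Polynomial R →+* _) =
    eval₂RingHom (S := Polynomial (Polynomial (Polynomial R))) (rho : R →+* _) X := by
  apply Polynomial.ringHom_ext <;> simp [rho, coe_eval₂RingHom]

end Stmt4Aux


/-- A `Ga`-action on a commutative ring `B`: a ring homomorphism `E : B → B[T]`
satisfying (A1) evaluation at `T = 0` is the identity, and (A2) coassociativity. -/
structure GaAction (B : Type*) [CommRing B] where
  toRingHom : B →+* Polynomial B
  eval_zero : ∀ b, (toRingHom b).eval 0 = b
  coassoc : ∀ b, Polynomial.eval₂ (Polynomial.C.comp Polynomial.C)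
      (Polynomial.C Polynomial.X + Polynomial.X) (toRingHom b)
      = Polynomial.map toRingHom (toRingHom b)

/-- for a `Ga`-action `E` on `R[x]` over `R` (an integral domain
containing a field), the element `λ(T) := E(x) − x` of `R[x][T]` lies in `R[T]`
(all its `T`-coefficients are constant polynomials) and is additive:
`λ(T₁ + T₂) = λ(T₁) + λ(T₂)` in `R[x][T₁][T₂]`. -/
theorem stmt4 {k R : Type*} [Field k] [CommRing R] [IsDomain R] [Algebra k R]
    (E : GaAction (Polynomial R))
    (hR : ∀ r : R, E.toRingHom (Polynomial.C r) = Polynomial.C (Polynomial.C r)) :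
    (∀ i : ℕ, (E.toRingHom Polynomial.X - Polynomial.C Polynomial.X).coeff i ∈
        Set.range (Polynomial.C : R → Polynomial R)) ∧
    Polynomial.eval₂ (Polynomial.C.comp Polynomial.C)
        (Polynomial.C Polynomial.X + Polynomial.X)
        (E.toRingHom Polynomial.X - Polynomial.C Polynomial.X)
      = Polynomial.eval₂ (Polynomial.C.comp Polynomial.C) (Polynomial.C Polynomial.X)
          (E.toRingHom Polynomial.X - Polynomial.C Polynomial.X)
        + Polynomial.eval₂ (Polynomial.C.comp Polynomial.C) Polynomial.X
            (E.toRingHom Polynomial.X - Polynomial.C Polynomial.X) := by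
  classical
  set f : Polynomial (Polynomial R) := E.toRingHom X with hfdef
  set F : Polynomial (Polynomial R) := sw f with hFdef
  -- eval at T = 0
  have h0 : F.map (evalRingHom (0 : R)) = X := by
    have h := DFunLike.congr_fun ev0_comp_sw f
    simp only [RingHom.coe_comp, Function.comp_apply, coe_mapRingHom, coe_evalRingHom] at h
    rw [hFdef, h]
    have := E.eval_zero X
    simpa using this
  -- coassociativity, rewritten after the swap
  have id3 : (chi (R := R)).comp (mapRingHom E.toRingHom) =
      (Polynomial.eval₂RingHom (Polynomial.C : Polynomial (Polynomial R) →+* _)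
          (F.map Polynomial.C)).comp
        ((mapRingHom (sigma (R := R))).comp sw) := by
    apply ringHom_ext2
    · intro r
      simp [hR r, coe_eval₂RingHom]
    · have h := DFunLike.congr_fun (chi1_eq (R := R)) f
      simp only [RingHom.coe_comp, Function.comp_apply, coe_mapRingHom] at h
      simp [coe_eval₂RingHom, ← hfdef, h, hFdef]
    · simp [coe_eval₂RingHom]
  have key : F.map tau = (F.map sigma).comp (F.map Polynomial.C) := by
    have hco := E.coassoc X
    have hL := DFunLike.congr_fun (chi_comp_subst (R := R)) f
    have hRh := DFunLike.congr_fun id3 f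
    simp only [RingHom.coe_comp, Function.comp_apply, coe_mapRingHom, coe_eval₂RingHom] at hL hRh
    rw [← hfdef] at hco
    calc F.map tau = chi (Polynomial.eval₂ (Polynomial.C.comp Polynomial.C)
          (Polynomial.C X + X) f) := by rw [hL, hFdef]
      _ = chi (f.map E.toRingHom) := by rw [hco]
      _ = Polynomial.eval₂ Polynomial.C (F.map Polynomial.C) ((sw f).map sigma) := by
          rw [hRh]
      _ = (F.map sigma).comp (F.map Polynomial.C) := by rw [← hFdef, Polynomial.comp]
  -- degree of F is 1
  have hd1 : (1 : ℕ) ≤ F.natDegree := by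
    have h : (X : Polynomial R).natDegree ≤ F.natDegree := by
      rw [← h0]; exact natDegree_map_le
    simpa using h
  have hdeq : F.natDegree = F.natDegree * F.natDegree := by
    calc F.natDegree = (F.map tau).natDegree :=
          (natDegree_map_eq_of_injective tau_injective F).symm
      _ = ((F.map sigma).comp (F.map Polynomial.C)).natDegree := by rw [key]
      _ = (F.map sigma).natDegree * (F.map Polynomial.C).natDegree := natDegree_comp
      _ = F.natDegree * F.natDegree := by
          rw [natDegree_map_eq_of_injective sigma_injective,
            natDegree_map_eq_of_injective Polynomial.C_injective]
  have hd : F.natDegree = 1 := by nlinarith [hdeq, hd1]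
  set a : Polynomial R := F.coeff 1 with hadef
  set l : Polynomial R := F.coeff 0 with hldef
  have hF : F = Polynomial.C a * X + Polynomial.C l :=
    eq_X_add_C_of_natDegree_le_one (le_of_eq hd)
  have ha0 : a.eval 0 = 1 := by
    have h := congrArg (fun p => Polynomial.coeff p 1) h0
    simpa [coeff_map] using h
  have hl0 : l.eval 0 = 0 := by
    have h := congrArg (fun p => Polynomial.coeff p 0) h0
    simpa [coeff_map] using h
  -- extract the two coefficient equations
  have keyL : F.map tau = Polynomial.C (tau a) * X + Polynomial.C (tau l) := by
    rw [hF]; simp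
  have keyR : (F.map sigma).comp (F.map Polynomial.C) =
      Polynomial.C (sigma a * Polynomial.C a) * X
        + Polynomial.C (sigma a * Polynomial.C l + sigma l) := by
    rw [hF]
    simp only [Polynomial.map_add, Polynomial.map_mul, map_C, map_X, add_comp, mul_comp,
      C_comp, X_comp, map_add, map_mul]
    ring
  have e : Polynomial.C (tau a) * X + Polynomial.C (tau l) =
      Polynomial.C (sigma a * Polynomial.C a) * X
        + Polynomial.C (sigma a * Polynomial.C l + sigma l) := by
    rw [← keyL, ← keyR, key]
  have e1 : tau a = sigma a * Polynomial.C a := by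
    have h := congrArg (fun p => Polynomial.coeff p 1) e
    simpa using h
  have e0 : tau l = sigma a * Polynomial.C l + sigma l := by
    have h := congrArg (fun p => Polynomial.coeff p 0) e
    simpa using h
  -- a = 1
  have ha : a = 1 := by
    have h := congrArg (evalRingHom (-X : Polynomial R)) e1
    have hpsi := DFunLike.congr_fun (psi_comp_tau (R := R)) a
    simp only [RingHom.coe_comp, Function.comp_apply, coe_evalRingHom] at hpsi h
    rw [hpsi, ha0, map_one] at h
    simp only [eval_mul, eval_C] at h
    have hunit : IsUnit a :=
      IsUnit.of_mul_eq_one (a := a) (Polynomial.eval (-X) (sigma a)) (by rw [mul_comm]; exact h.symm)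
    have hdeg0 : a.natDegree = 0 := natDegree_eq_zero_of_isUnit hunit
    have hC : a = Polynomial.C (a.coeff 0) := eq_C_of_natDegree_eq_zero hdeg0
    rw [hC] at ha0 ⊢
    simp only [eval_C] at ha0
    rw [ha0, map_one]
  have e0' : tau l = Polynomial.C l + sigma l := by
    rw [ha] at e0; simpa using e0
  have hF' : F = X + Polynomial.C l := by rw [hF, ha]; simp
  -- translate back
  have hswF : sw F = f := by
    have h := DFunLike.congr_fun (sw_sw (R := R)) f
    simpa [← hFdef] using h
  have hfeq : f = Polynomial.C X + l.map Polynomial.C := by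
    rw [← hswF, hF', map_add, sw_X, sw_C]
  have hlam : E.toRingHom X - Polynomial.C X = l.map Polynomial.C := by
    rw [← hfdef, hfeq]; ring
  constructor
  · intro i
    rw [hlam, coeff_map]
    exact ⟨_, rfl⟩
  · rw [hlam, eval₂_map, eval₂_map, eval₂_map]
    have hrho : ((Polynomial.C.comp Polynomial.C).comp Polynomial.C :
        R →+* Polynomial (Polynomial (Polynomial R))) = rho := rfl
    rw [hrho]
    have m1 : Polynomial.eval₂ (rho (R := R)) (Polynomial.C X + X) l = mu (tau l) := by
      have h := DFunLike.congr_fun (mu_comp_tau (R := R)) l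
      simp only [RingHom.coe_comp, Function.comp_apply, coe_eval₂RingHom] at h
      rw [h]
    have m2 : Polynomial.eval₂ (rho (R := R)) (Polynomial.C X) l = mu (Polynomial.C l) := by
      have h := DFunLike.congr_fun (mu_comp_C (R := R)) l
      simp only [RingHom.coe_comp, Function.comp_apply, coe_eval₂RingHom] at h
      rw [h]
    have m3 : Polynomial.eval₂ (rho (R := R)) X l = mu (sigma l) := by
      have h := DFunLike.congr_fun (mu_comp_sigma (R := R)) l
      simp only [RingHom.coe_comp, Function.comp_apply, coe_eval₂RingHom] at h
      rw [h]
    rw [m1, m2, m3, e0', map_add]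
end

section
/- Let R be a unique factorization domain and let f(T), g(T) ∈ R[T] \ {0} with g(0) = 0. If f(T) and g(T) are both primitive polynomials, then the composite f(g(T)) is also primitive. -/
open Polynomial

/-- a variant of Gauss's lemma: over a UFD, if `f(T)` and `g(T)` are
nonzero primitive polynomials and `g(0) = 0`, then `f(g(T))` is primitive. -/
theorem stmt6 {R : Type*} [CommRing R] [IsDomain R] [UniqueFactorizationMonoid R]
    (f g : Polynomial R) (hf : f ≠ 0) (hg : g ≠ 0) (hg0 : g.coeff 0 = 0)
    (hfp : f.IsPrimitive) (hgp : g.IsPrimitive) :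
    (f.comp g).IsPrimitive := by
  intro r hr
  by_contra hru
  -- r is not a unit; it divides all coefficients of f.comp g
  -- First, f.comp g ≠ 0
  have hcomp : f.comp g ≠ 0 := by
    intro h
    rcases (Polynomial.comp_eq_zero_iff).mp h with h1 | ⟨_, h2⟩
    · exact hf h1
    · rw [hg0, map_zero] at h2; exact hg h2
  have hr0 : r ≠ 0 := by
    rintro rfl
    simp only [map_zero, zero_dvd_iff] at hr
    exact hcomp hr
  obtain ⟨p, hpi, hpdvd⟩ := WfDvdMonoid.exists_irreducible_factor hru hr0
  have hp : Prime p := UniqueFactorizationMonoid.irreducible_iff_prime.mp hpi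
  -- p prime divides r, hence C p ∣ f.comp g
  have hpC : Polynomial.C p ∣ f.comp g := dvd_trans (map_dvd Polynomial.C hpdvd) hr
  -- work modulo p
  set I := Ideal.span {p}
  have hIprime : I.IsPrime := (Ideal.span_singleton_prime hp.ne_zero).mpr hp
  letI : IsDomain (R ⧸ I) := Ideal.Quotient.isDomain I
  set φ := Ideal.Quotient.mk I
  have hmemiff : ∀ x : R, φ x = 0 ↔ p ∣ x := fun x => by
    rw [Ideal.Quotient.eq_zero_iff_mem, Ideal.mem_span_singleton]
  have hmap0 : (f.comp g).map φ = 0 := by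
    ext n
    rw [Polynomial.coeff_map, Polynomial.coeff_zero, hmemiff]
    exact (Polynomial.C_dvd_iff_dvd_coeff p (f.comp g)).mp hpC n
  rw [Polynomial.map_comp] at hmap0
  have hmapg : g.map φ ≠ 0 := by
    intro h
    have : Polynomial.C p ∣ g := by
      rw [Polynomial.C_dvd_iff_dvd_coeff]
      intro n
      rw [← hmemiff, ← Polynomial.coeff_map, h, Polynomial.coeff_zero]
    exact hp.not_unit (hgp p this)
  rcases Polynomial.comp_eq_zero_iff.mp hmap0 with h1 | ⟨_, h2⟩
  · have : Polynomial.C p ∣ f := by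
      rw [Polynomial.C_dvd_iff_dvd_coeff]
      intro n
      rw [← hmemiff, ← Polynomial.coeff_map, h1, Polynomial.coeff_zero]
    exact hp.not_unit (hfp p this)
  · have : (g.map φ).coeff 0 = 0 := by
      rw [Polynomial.coeff_map, hg0, map_zero]
    rw [this, map_zero] at h2
    exact hmapg h2
end

section
/- Let A be an integral domain containing a field of characteristic p > 0, let f ∈ A \ {0}, let R be a subring of A, and let ε be the A-algebra automorphism of A[x] with ε(x) = x + f. Suppose there exists an integral domain à containing A such that: (a) the factorial closure of R[f] in à equals Ã; and (b) every Ga-action on A[x] over R extends to a Ga-action on Ã[x]. Then A is f-stable over R; that is, every Ga-action E on A[x] with R ⊆ A[x]^E and E_1 = ε satisfies A[x]^E = A. -/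
/-- A subring `C` of a domain `D` is factorially closed if `ab ∈ C \ {0}` implies
`a, b ∈ C`. -/
def IsFactoriallyClosed {D : Type*} [CommRing D] (C : Subring D) : Prop :=
  ∀ a b : D, a * b ∈ C → a * b ≠ 0 → a ∈ C


open Polynomial

namespace GaAction

variable {B : Type*} [CommRing B]

lemma ne_zero (E : GaAction B) {b : B} (hb : b ≠ 0) : E.toRingHom b ≠ 0 := by
  intro h
  apply hb
  have h2 := E.eval_zero b
  rw [h] at h2
  simpa using h2.symm

lemma inv_of_mul [IsDomain B] (E : GaAction B) {a b : B}
    (h : E.toRingHom (a * b) = Polynomial.C (a * b)) (hab : a * b ≠ 0) :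
    E.toRingHom a = Polynomial.C a := by
  have ha : a ≠ 0 := fun h0 => hab (by simp [h0])
  have hb : b ≠ 0 := fun h0 => hab (by simp [h0])
  have hP := E.ne_zero ha
  have hQ := E.ne_zero hb
  have hdeg : (E.toRingHom a).natDegree + (E.toRingHom b).natDegree = 0 := by
    rw [← Polynomial.natDegree_mul hP hQ, ← map_mul, h]
    exact Polynomial.natDegree_C _
  have hd0 : (E.toRingHom a).natDegree = 0 := Nat.eq_zero_of_add_eq_zero_right hdeg
  have hC := Polynomial.eq_C_of_natDegree_eq_zero hd0
  rw [hC, Polynomial.coeff_zero_eq_eval_zero, E.eval_zero]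

lemma leadingCoeff_inv [IsDomain B] (E : GaAction B) (b : B) :
    E.toRingHom ((E.toRingHom b).leadingCoeff)
      = Polynomial.C ((E.toRingHom b).leadingCoeff) := by
  set v := E.toRingHom b with hv
  set m := v.natDegree with hm
  have h := E.coassoc b
  have hq : (Polynomial.C Polynomial.X + Polynomial.X : Polynomial (Polynomial B)).Monic := by
    rw [add_comm]; exact Polynomial.monic_X_add_C _
  have hqd : (Polynomial.C Polynomial.X + Polynomial.X : Polynomial (Polynomial B)).natDegree = 1 := by
    rw [add_comm]; exact Polynomial.natDegree_X_add_C _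
  have hL : (Polynomial.eval₂ (Polynomial.C.comp Polynomial.C)
      (Polynomial.C Polynomial.X + Polynomial.X) v).coeff m = Polynomial.C (v.coeff m) := by
    rw [Polynomial.eval₂_eq_sum, Polynomial.sum, Polynomial.finset_sum_coeff]
    rw [Finset.sum_eq_single m]
    · rw [RingHom.comp_apply, Polynomial.coeff_C_mul]
      have : ((Polynomial.C Polynomial.X + Polynomial.X : Polynomial (Polynomial B)) ^ m).coeff m = 1 := by
        have h1 := (hq.pow m).coeff_natDegree
        rwa [hq.natDegree_pow, hqd, mul_one] at h1
      rw [this, mul_one]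
    · intro i his hine
      have hile : i ≤ m := Polynomial.le_natDegree_of_mem_supp _ his
      have hilt : i < m := lt_of_le_of_ne hile hine
      rw [RingHom.comp_apply, Polynomial.coeff_C_mul]
      have : ((Polynomial.C Polynomial.X + Polynomial.X : Polynomial (Polynomial B)) ^ i).coeff m = 0 := by
        apply Polynomial.coeff_eq_zero_of_natDegree_lt
        rw [hq.natDegree_pow, hqd, mul_one]
        exact hilt
      rw [this, mul_zero]
    · intro hnm
      rw [Polynomial.notMem_support_iff.mp hnm]
      simp
  have hR : (Polynomial.map E.toRingHom v).coeff m = E.toRingHom (v.coeff m) :=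
    Polynomial.coeff_map _ _
  have := congrArg (fun P => Polynomial.coeff P m) h
  rw [hL, hR] at this
  rw [Polynomial.leadingCoeff, ← hm, this]

lemma C_f_inv {A : Type*} [CommRing A] [IsDomain A] {f : A} (hf : f ≠ 0)
    (E : GaAction (Polynomial A))
    (hE1 : ∀ g : Polynomial A,
      (E.toRingHom g).eval 1 = g.comp (Polynomial.X + Polynomial.C f)) :
    E.toRingHom (Polynomial.C f) = Polynomial.C (Polynomial.C f) := by
  set u := E.toRingHom Polynomial.X with hu
  set v := E.toRingHom (Polynomial.C f) with hvdef
  have hu1 : u.eval 1 = Polynomial.X + Polynomial.C f := by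
    have h := hE1 Polynomial.X
    rwa [Polynomial.X_comp] at h
  -- outer evaluation of coassociativity at 1 : u.comp (X + 1) = u + v
  have houter : u.comp (Polynomial.X + 1) = u + v := by
    have h := congrArg (Polynomial.eval (1 : Polynomial (Polynomial A))) (E.coassoc Polynomial.X)
    rw [Polynomial.eval_map, Polynomial.eval₂_at_one] at h
    rw [← Polynomial.coe_evalRingHom, Polynomial.hom_eval₂] at h
    have hc1 : (Polynomial.evalRingHom (1 : Polynomial (Polynomial A))).comp
        ((Polynomial.C : Polynomial (Polynomial A) →+* Polynomial (Polynomial (Polynomial A))).comp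
          (Polynomial.C : Polynomial A →+* Polynomial (Polynomial A)))
        = (Polynomial.C : Polynomial A →+* Polynomial (Polynomial A)) := by
      apply RingHom.ext; intro b; simp
    have hc2 : (Polynomial.evalRingHom (1 : Polynomial (Polynomial A)))
        (Polynomial.C Polynomial.X + Polynomial.X) = Polynomial.X + 1 := by
      simp
    rw [hc1, hc2] at h
    rw [hu1, map_add] at h
    exact h
  -- inner evaluation : coefficients of u.comp (1 + X)
  have hinner : ∀ j : ℕ, (u.comp (1 + Polynomial.X)).coeff j
      = (u.coeff j).comp (Polynomial.X + Polynomial.C f) := by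
    intro j
    have h := congrArg (Polynomial.map (Polynomial.evalRingHom (1 : Polynomial A)))
      (E.coassoc Polynomial.X)
    rw [← Polynomial.coe_mapRingHom, Polynomial.hom_eval₂] at h
    have hc1 : (Polynomial.mapRingHom (Polynomial.evalRingHom (1 : Polynomial A))).comp
        ((Polynomial.C : Polynomial (Polynomial A) →+* Polynomial (Polynomial (Polynomial A))).comp
          (Polynomial.C : Polynomial A →+* Polynomial (Polynomial A)))
        = (Polynomial.C : Polynomial A →+* Polynomial (Polynomial A)).comp
            (RingHom.id (Polynomial A)) := by
      apply RingHom.ext; intro b; simp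
    have hc2 : (Polynomial.mapRingHom (Polynomial.evalRingHom (1 : Polynomial A)))
        (Polynomial.C Polynomial.X + Polynomial.X) = 1 + Polynomial.X := by
      simp
    rw [hc1, hc2] at h
    rw [RingHom.comp_id] at h
    have h2 := congrArg (fun P => Polynomial.coeff P j) h
    rw [show Polynomial.eval₂ (Polynomial.C : Polynomial A →+* Polynomial (Polynomial A))
        (1 + Polynomial.X) u = u.comp (1 + Polynomial.X) from rfl] at h2
    rw [h2]
    simp only [Polynomial.coe_mapRingHom]
    rw [Polynomial.coeff_map, Polynomial.coeff_map]
    exact hE1 (u.coeff j)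
  -- the leading coefficient of v
  have hv0 : v ≠ 0 := by
    intro h0
    have h2 := E.eval_zero (Polynomial.C f)
    rw [← hvdef, h0] at h2
    simp only [Polynomial.eval_zero] at h2
    exact hf (Polynomial.C_eq_zero.mp h2.symm ▸ rfl)
  set m := v.natDegree with hmdef
  set s := v.coeff m with hsdef
  have hs_ne : s ≠ 0 := by
    rw [hsdef, hmdef]
    exact Polynomial.leadingCoeff_ne_zero.mpr hv0
  have hs_eq : s = (u.coeff m).comp (Polynomial.X + Polynomial.C f) - u.coeff m := by
    have hveq : v = u.comp (Polynomial.X + 1) - u := by rw [houter]; ring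
    rw [hsdef, hveq, Polynomial.coeff_sub, show (Polynomial.X + 1 : Polynomial (Polynomial A))
      = 1 + Polynomial.X from add_comm _ _, hinner m]
  have hcompmap : ∀ q : Polynomial A, (u.coeff m).comp q
      = ((u.coeff m).map Polynomial.C).eval q := by
    intro q
    rw [Polynomial.comp, Polynomial.eval₂_eq_eval_map]
  have hdvd : Polynomial.C f ∣ s := by
    rw [hs_eq]
    nth_rewrite 2 [show u.coeff m = (u.coeff m).comp Polynomial.X from (Polynomial.comp_X (p := u.coeff m)).symm]
    rw [hcompmap, hcompmap]
    have h3 := Polynomial.sub_dvd_eval_sub (Polynomial.X + Polynomial.C f) Polynomial.X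
      ((u.coeff m).map Polynomial.C)
    simpa using h3
  obtain ⟨t, ht⟩ := hdvd
  have ht_ne : t ≠ 0 := by
    intro h0; rw [h0, mul_zero] at ht; exact hs_ne ht
  have hEs : E.toRingHom s = Polynomial.C s := by
    have h := E.leadingCoeff_inv (Polynomial.C f)
    rwa [Polynomial.leadingCoeff, ← hvdef, ← hmdef, ← hsdef] at h
  have hmul : v * E.toRingHom t = Polynomial.C s := by
    rw [← hEs, ht, map_mul, ← hvdef]
  have hdeg : v.natDegree + (E.toRingHom t).natDegree = 0 := by
    rw [← Polynomial.natDegree_mul hv0 (E.ne_zero ht_ne), hmul]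
    exact Polynomial.natDegree_C _
  have hm0 : v.natDegree = 0 := Nat.eq_zero_of_add_eq_zero_right hdeg
  have hc := Polynomial.eq_C_of_natDegree_eq_zero hm0
  rw [hc, Polynomial.coeff_zero_eq_eval_zero, hvdef, E.eval_zero]

end GaAction


/-- sufficient criterion for `f`-stability.  `A` is a domain containing a
field of characteristic `p > 0`, `f ∈ A \ {0}`, `R` a subring of `A`, and
`ε : A[x] → A[x]` the automorphism `x ↦ x + f`.  If there is an over ring `Abig ⊇ A` such
that (a) the factorial closure of `R[f]` in `Abig` is all of `Abig` (equivalently, every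
factorially closed subring of `Abig` containing `R` and `f` is `Abig`), and (b) every
`Ga`-action on `A[x]` over `R` extends to `Abig[x]`, then every `Ga`-action `E` on `A[x]`
over `R` with `E₁ = ε` has invariant ring exactly `A`. -/
theorem stmt8 {k A Abig : Type*} [Field k] [CommRing A] [IsDomain A] [Algebra k A]
    (p : ℕ) [Fact p.Prime] [CharP A p]
    (f : A) (hf : f ≠ 0) (R : Subring A)
    [CommRing Abig] [IsDomain Abig] [Algebra A Abig]
    (hinj : Function.Injective (algebraMap A Abig))
    (ha : ∀ C : Subring Abig, IsFactoriallyClosed C →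
      (∀ r ∈ R, algebraMap A Abig r ∈ C) → algebraMap A Abig f ∈ C → C = ⊤)
    (hb : ∀ E : GaAction (Polynomial A),
      (∀ r ∈ R, E.toRingHom (Polynomial.C r) = Polynomial.C (Polynomial.C r)) →
      ∃ Et : GaAction (Polynomial Abig), ∀ g : Polynomial A,
        Et.toRingHom (g.map (algebraMap A Abig)) =
          Polynomial.map (Polynomial.mapRingHom (algebraMap A Abig)) (E.toRingHom g))
    (E : GaAction (Polynomial A))
    (hR : ∀ r ∈ R, E.toRingHom (Polynomial.C r) = Polynomial.C (Polynomial.C r))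
    (hE1 : ∀ g : Polynomial A,
      (E.toRingHom g).eval 1 = g.comp (Polynomial.X + Polynomial.C f)) :
    ∀ g : Polynomial A, E.toRingHom g = Polynomial.C g ↔
      g ∈ Set.range (Polynomial.C : A → Polynomial A) := by
  obtain ⟨Et, het⟩ := hb E hR
  have hAf : E.toRingHom (Polynomial.C f) = Polynomial.C (Polynomial.C f) :=
    GaAction.C_f_inv hf E hE1
  set φ₁ : Abig →+* Polynomial (Polynomial Abig) :=
    Et.toRingHom.comp (Polynomial.C : Abig →+* Polynomial Abig) with hφ₁
  set φ₂ : Abig →+* Polynomial (Polynomial Abig) :=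
    (Polynomial.C : Polynomial Abig →+* Polynomial (Polynomial Abig)).comp
      (Polynomial.C : Abig →+* Polynomial Abig) with hφ₂
  have hmem : ∀ x : Abig, x ∈ RingHom.eqLocus φ₁ φ₂ ↔
      Et.toRingHom (Polynomial.C x) = Polynomial.C (Polynomial.C x) := by
    intro x; rfl
  have hfc : IsFactoriallyClosed (RingHom.eqLocus φ₁ φ₂) := by
    intro a b hab habne
    rw [hmem] at hab ⊢
    have h1 : Et.toRingHom (Polynomial.C a * Polynomial.C b)
        = Polynomial.C (Polynomial.C a * Polynomial.C b) := by
      rw [← Polynomial.C_mul, hab]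
    have h2 : Polynomial.C a * Polynomial.C b ≠ 0 := by
      rw [← Polynomial.C_mul]
      exact Polynomial.C_ne_zero.mpr habne
    exact Et.inv_of_mul h1 h2
  have hmemR : ∀ r ∈ R, algebraMap A Abig r ∈ RingHom.eqLocus φ₁ φ₂ := by
    intro r hr
    rw [hmem]
    have h := het (Polynomial.C r)
    rw [Polynomial.map_C, hR r hr] at h
    rw [h]
    simp [Polynomial.map_C]
  have hmemf : algebraMap A Abig f ∈ RingHom.eqLocus φ₁ φ₂ := by
    rw [hmem]
    have h := het (Polynomial.C f)
    rw [Polynomial.map_C, hAf] at h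
    rw [h]
    simp [Polynomial.map_C]
  have htop := ha _ hfc hmemR hmemf
  have hinj1 : Function.Injective ⇑(Polynomial.mapRingHom (algebraMap A Abig)) := by
    rw [Polynomial.coe_mapRingHom]
    exact Polynomial.map_injective _ hinj
  have hinj2 := Polynomial.map_injective _ hinj1
  have hA : ∀ a : A, E.toRingHom (Polynomial.C a) = Polynomial.C (Polynomial.C a) := by
    intro a
    have hmem2 : algebraMap A Abig a ∈ RingHom.eqLocus φ₁ φ₂ := by
      rw [htop]; trivial
    rw [hmem] at hmem2
    have h2 := het (Polynomial.C a)
    rw [Polynomial.map_C] at h2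
    rw [h2] at hmem2
    have h3 : Polynomial.C (Polynomial.C (algebraMap A Abig a))
        = Polynomial.map (Polynomial.mapRingHom (algebraMap A Abig))
            (Polynomial.C (Polynomial.C a)) := by
      simp [Polynomial.map_C]
    rw [h3] at hmem2
    exact hinj2 hmem2
  intro g
  constructor
  · intro hg
    by_cases hg0 : g = 0
    · exact ⟨0, by simp [hg0]⟩
    by_cases hd0 : g.natDegree = 0
    · exact ⟨g.coeff 0, (Polynomial.eq_C_of_natDegree_eq_zero hd0).symm⟩
    exfalso
    set u := E.toRingHom Polynomial.X with hu
    set hCC : A →+* Polynomial (Polynomial A) :=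
      (Polynomial.C : Polynomial A →+* Polynomial (Polynomial A)).comp
        (Polynomial.C : A →+* Polynomial A) with hCCdef
    have hErep : ∀ q : Polynomial A, E.toRingHom q = Polynomial.eval₂ hCC u q := by
      intro q
      have hh : E.toRingHom = Polynomial.eval₂RingHom hCC u := by
        apply Polynomial.ringHom_ext'
        · apply RingHom.ext
          intro a
          rw [RingHom.comp_apply, RingHom.comp_apply, hA a]
          simp [hCCdef, Polynomial.coe_eval₂RingHom, Polynomial.eval₂_C]
        · simp [Polynomial.coe_eval₂RingHom, Polynomial.eval₂_X, hu]
      rw [hh]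
      simp [Polynomial.coe_eval₂RingHom]
    have hn : u.natDegree ≠ 0 := by
      intro hn0
      have hceq := Polynomial.eq_C_of_natDegree_eq_zero hn0
      have he0 : u.eval 0 = Polynomial.X := E.eval_zero Polynomial.X
      rw [Polynomial.coeff_zero_eq_eval_zero, he0] at hceq
      have h1 := hE1 Polynomial.X
      rw [Polynomial.X_comp, ← hu, hceq] at h1
      rw [Polynomial.eval_C] at h1
      have : Polynomial.C f = 0 := by
        have := left_eq_add.mp h1
        exact this
      exact hf (Polynomial.C_eq_zero.mp this)
    have hu0 : u ≠ 0 := by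
      intro h0
      apply hn
      rw [h0, Polynomial.natDegree_zero]
    set d := g.natDegree with hd
    set n := u.natDegree with hn'
    have hdn : d * n ≠ 0 := Nat.mul_ne_zero hd0 hn
    have hc0 : (Polynomial.C g).coeff (d * n) = 0 := by
      rw [Polynomial.coeff_C, if_neg hdn]
    rw [← hg, hErep g, Polynomial.eval₂_eq_sum, Polynomial.sum_def,
      Polynomial.finset_sum_coeff] at hc0
    have hsum : (∑ i ∈ g.support, (hCC (g.coeff i) * u ^ i).coeff (d * n))
        = Polynomial.C (g.coeff d) * u.leadingCoeff ^ d := by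
      rw [Finset.sum_eq_single d]
      · rw [hCCdef, RingHom.comp_apply, Polynomial.coeff_C_mul,
          Polynomial.coeff_pow_mul_natDegree]
      · intro i his hine
        have hilt : i < d := lt_of_le_of_ne (Polynomial.le_natDegree_of_mem_supp _ his) hine
        apply Polynomial.coeff_eq_zero_of_natDegree_lt
        calc (hCC (g.coeff i) * u ^ i).natDegree
            ≤ (hCC (g.coeff i)).natDegree + (u ^ i).natDegree := Polynomial.natDegree_mul_le
          _ ≤ 0 + i * n := by
              apply add_le_add
              · rw [hCCdef, RingHom.comp_apply]
                exact le_of_eq (Polynomial.natDegree_C _)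
              · exact Polynomial.natDegree_pow_le
          _ = i * n := by rw [zero_add]
          _ < d * n := by
              apply Nat.mul_lt_mul_of_lt_of_le hilt (le_refl n)
              exact Nat.pos_of_ne_zero hn
      · intro hnd
        exact absurd (Polynomial.natDegree_mem_support_of_nonzero hg0) hnd
    rw [hsum] at hc0
    have hne : Polynomial.C (g.coeff d) * u.leadingCoeff ^ d ≠ 0 := by
      apply mul_ne_zero
      · exact Polynomial.C_ne_zero.mpr (by rw [hd]; exact Polynomial.leadingCoeff_ne_zero.mpr hg0)
      · exact pow_ne_zero _ (Polynomial.leadingCoeff_ne_zero.mpr hu0)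
    exact hne hc0
  · rintro ⟨a, rfl⟩
    exact hA a
end

section
/- Let B be a unique factorization domain containing a field of characteristic p > 0, let R be a subring of B, S := R \ {0}, and k := Frac(R). Let σ be an automorphism of B with σ ≠ id, and suppose there exist a subring A of the localization B_S with k ⊆ A and an element r ∈ B_S such that B_S = A[r] is a polynomial ring in r over A, σ extends to an A-algebra automorphism σ̃ of A[r], and f := σ̃(r) − r lies in A \ {0}. Assume A is f-stable over k, i.e., every Ga-action F on A[r] with k ⊆ A[r]^F and F_1 = σ̃ satisfies A[r]^F = A. If σ is exponential over R (σ = E_1 for some Ga-action E on B with R ⊆ B^E), then the Ga-action Ẽ : A[r] → A[r][T], h(r) ↦ h(r + fT), restricts to B, i.e., Ẽ(B) ⊆ B[T]. -/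
/-- The multiplicative set `R \ {0}` of nonzero elements of a subring `R` of a
domain `B`. -/
def nonzeroSubmonoid {B : Type*} [CommRing B] [IsDomain B] (R : Subring B) :
    Submonoid B where
  carrier := {x : B | x ∈ R ∧ x ≠ 0}
  one_mem' := ⟨R.one_mem, one_ne_zero⟩
  mul_mem' := fun ha hb => ⟨R.mul_mem ha.1 hb.1, mul_ne_zero ha.2 hb.2⟩

/-! ### Auxiliary divisibility lemmas in a UFD -/

open Polynomial in
theorem aux_L1 {B : Type*} [CommRing B] {q : B} (v : ℕ) {Δ : Polynomial B}
    (hv : ∀ i, q ^ v ∣ Δ.coeff i) : ∀ j ν, q ^ (j * v) ∣ (Δ ^ j).coeff ν := by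
  intro j
  induction j with
  | zero =>
    intro ν
    rw [pow_zero, Polynomial.coeff_one, Nat.zero_mul, pow_zero]
    exact one_dvd _
  | succ j ih =>
    intro ν
    rw [pow_succ Δ j, Polynomial.coeff_mul]
    refine Finset.dvd_sum fun x hx => ?_
    rw [show (j + 1) * v = j * v + v by ring, pow_add]
    exact mul_dvd_mul (ih x.1) (hv x.2)

open Polynomial in
theorem aux_L2 {B : Type*} [CommRing B] {q : B} (v δ : ℕ) {Δ : Polynomial B}
    (hv : ∀ i, q ^ v ∣ Δ.coeff i) (hgt : ∀ i, δ < i → q ^ (v + 1) ∣ Δ.coeff i) :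
    ∀ j ν, j * δ < ν → q ^ (j * v + 1) ∣ (Δ ^ j).coeff ν := by
  intro j
  induction j with
  | zero =>
    intro ν hν
    rw [pow_zero, Polynomial.coeff_one, if_neg (by omega : ¬ ν = 0)]
    exact dvd_zero _
  | succ j ih =>
    intro ν hν
    rw [pow_succ Δ j, Polynomial.coeff_mul]
    refine Finset.dvd_sum fun x hx => ?_
    have hab : x.1 + x.2 = ν := Finset.HasAntidiagonal.mem_antidiagonal.mp hx
    by_cases hb : δ < x.2
    · rw [show (j + 1) * v + 1 = j * v + (v + 1) by ring, pow_add]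
      exact mul_dvd_mul (aux_L1 v hv j x.1) (hgt _ hb)
    · push_neg at hb
      have ha : j * δ < x.1 := by
        have : (j + 1) * δ = j * δ + δ := by ring
        omega
      rw [show (j + 1) * v + 1 = (j * v + 1) + v by ring, pow_add]
      exact mul_dvd_mul (ih x.1 ha) (hv x.2)

open Polynomial in
theorem aux_L3 {B : Type*} [CommRing B] {q : B} (v δ : ℕ) {Δ : Polynomial B}
    (hv : ∀ i, q ^ v ∣ Δ.coeff i) (hgt : ∀ i, δ < i → q ^ (v + 1) ∣ Δ.coeff i) :
    ∀ j, q ^ (j * v + 1) ∣ ((Δ ^ j).coeff (j * δ) - (Δ.coeff δ) ^ j) := by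
  intro j
  induction j with
  | zero => simp
  | succ j ih =>
    rw [pow_succ Δ j, Polynomial.coeff_mul]
    have hmem : ((j * δ : ℕ), δ) ∈ Finset.HasAntidiagonal.antidiagonal ((j+1) * δ) := by
      rw [Finset.HasAntidiagonal.mem_antidiagonal]; ring
    rw [← Finset.add_sum_erase _ _ hmem]
    have key : (Δ ^ j).coeff (j * δ) * Δ.coeff δ - Δ.coeff δ ^ (j + 1)
        = ((Δ ^ j).coeff (j * δ) - Δ.coeff δ ^ j) * Δ.coeff δ := by ring
    have h1 : q ^ ((j+1) * v + 1) ∣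
        (Δ ^ j).coeff (j * δ) * Δ.coeff δ - Δ.coeff δ ^ (j + 1) := by
      rw [key, show (j + 1) * v + 1 = (j * v + 1) + v by ring, pow_add]
      exact mul_dvd_mul ih (hv δ)
    have h2 : q ^ ((j+1) * v + 1) ∣
        ∑ x ∈ (Finset.HasAntidiagonal.antidiagonal ((j+1) * δ)).erase ((j * δ : ℕ), δ),
          (Δ ^ j).coeff x.1 * Δ.coeff x.2 := by
      refine Finset.dvd_sum fun x hx => ?_
      have hne : x ≠ ((j * δ : ℕ), δ) := Finset.ne_of_mem_erase hx
      have hab : x.1 + x.2 = (j+1) * δ :=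
        Finset.HasAntidiagonal.mem_antidiagonal.mp (Finset.mem_of_mem_erase hx)
      by_cases hb : δ < x.2
      · rw [show (j + 1) * v + 1 = j * v + (v + 1) by ring, pow_add]
        exact mul_dvd_mul (aux_L1 v hv j x.1) (hgt _ hb)
      · push_neg at hb
        have hblt : x.2 < δ := by
          rcases Nat.lt_or_ge x.2 δ with h | h
          · exact h
          · exfalso
            have hx2 : x.2 = δ := le_antisymm hb h
            have hx1 : x.1 = j * δ := by
              have : (j + 1) * δ = j * δ + δ := by ring
              omega
            exact hne (Prod.ext (by omega) (by omega))
        have ha : j * δ < x.1 := by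
          have : (j + 1) * δ = j * δ + δ := by ring
          omega
        rw [show (j + 1) * v + 1 = (j * v + 1) + v by ring, pow_add]
        exact mul_dvd_mul (aux_L2 v δ hv hgt j x.1 ha) (hv x.2)
    calc q ^ ((j+1) * v + 1) ∣ ((Δ ^ j).coeff (j * δ) * Δ.coeff δ - Δ.coeff δ ^ (j + 1))
          + ∑ x ∈ (Finset.HasAntidiagonal.antidiagonal ((j+1) * δ)).erase ((j * δ : ℕ), δ),
            (Δ ^ j).coeff x.1 * Δ.coeff x.2 := dvd_add h1 h2
      _ = (Δ ^ j).coeff (j * δ) * Δ.coeff δ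
          + (∑ x ∈ (Finset.HasAntidiagonal.antidiagonal ((j+1) * δ)).erase ((j * δ : ℕ), δ),
            (Δ ^ j).coeff x.1 * Δ.coeff x.2) - Δ.coeff δ ^ (j + 1) := by ring

theorem aux_dvd_of_forall_prime {B : Type*} [CommRing B] [IsDomain B]
    [UniqueFactorizationMonoid B] :
    ∀ (a : B), a ≠ 0 → ∀ b : B,
      (∀ q : B, Prime q → emultiplicity q a ≤ emultiplicity q b) → a ∣ b := by
  intro a
  induction a using UniqueFactorizationMonoid.induction_on_prime with
  | h₁ => intro h; exact absurd rfl h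
  | h₂ x hx => intro _ b _; exact hx.dvd
  | h₃ a p ha hp ih =>
    intro hpa b hb
    by_cases hb0 : b = 0
    · exact hb0 ▸ dvd_zero _
    · have hpdvd : p ∣ b := by
        have h0 : ((1 : ℕ) : ℕ∞) ≤ emultiplicity p p :=
          pow_dvd_iff_le_emultiplicity.mp (by simpa using dvd_refl p)
        have h1 : ((1 : ℕ) : ℕ∞) ≤ emultiplicity p (p * a) :=
          le_trans h0 (emultiplicity_le_emultiplicity_of_dvd_right (Dvd.intro a rfl))
        have h2 := le_trans h1 (hb p hp)
        rw [← pow_dvd_iff_le_emultiplicity] at h2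
        simpa using h2
      obtain ⟨b', rfl⟩ := hpdvd
      have hb'0 : b' ≠ 0 := by rintro rfl; simp at hb0
      refine mul_dvd_mul_left p (ih ha b' fun q hq => ?_)
      have h1 := hb q hq
      rw [emultiplicity_mul hq, emultiplicity_mul hq] at h1
      have hfin : emultiplicity q p ≠ ⊤ :=
        finiteMultiplicity_iff_emultiplicity_ne_top.mp
          (FiniteMultiplicity.of_not_isUnit hq.not_isUnit hp.ne_zero)
      exact (WithTop.add_le_add_iff_left hfin).mp h1
open Polynomial Finset in
theorem aux_coreB {B : Type*} [CommRing B] [IsDomain B] [UniqueFactorizationMonoid B]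
    {t u : B} (ht : t ≠ 0) (hu : u ≠ 0) {G Δ : Polynomial B}
    (hΔ0 : Δ.coeff 0 = 0) (hΔne : Δ ≠ 0) {n : ℕ} (hn : G.natDegree ≤ n)
    (H : ∀ ν : ℕ, t * u ^ n ∣
      ∑ j ∈ Finset.range (n + 1), G.coeff j * u ^ (n - j) * (Δ ^ j).coeff ν) :
    ∀ j0, j0 ≤ n → t * u ^ j0 ∣ G.coeff j0 * (Δ.eval 1) ^ j0 := by
  classical
  intro j0 hj0n
  by_cases hG0 : G.coeff j0 = 0
  · simp [hG0]
  set Φ := Δ.eval 1 with hΦdef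
  refine aux_dvd_of_forall_prime _ (mul_ne_zero ht (pow_ne_zero _ hu)) _ fun q hq => ?_
  have hfin : ∀ {x : B}, x ≠ 0 → FiniteMultiplicity q x := fun hx =>
    FiniteMultiplicity.of_not_isUnit hq.not_isUnit hx
  -- the support of Δ and minimal multiplicity
  have hInonempty : Δ.support.Nonempty := Polynomial.support_nonempty.mpr hΔne
  set I := Δ.support with hIdef
  have hvne : (I.image fun i => multiplicity q (Δ.coeff i)).Nonempty := hInonempty.image _
  set v := (I.image fun i => multiplicity q (Δ.coeff i)).min' hvne with hvdef
  have hvmem := Finset.min'_mem _ hvne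
  obtain ⟨i0, hi0I, hi0v⟩ := Finset.mem_image.mp hvmem
  have hDfilne : (I.filter fun i => multiplicity q (Δ.coeff i) = v).Nonempty :=
    ⟨i0, Finset.mem_filter.mpr ⟨hi0I, hi0v⟩⟩
  set δ := (I.filter fun i => multiplicity q (Δ.coeff i) = v).max' hDfilne with hδdef
  have hδmem := Finset.max'_mem _ hDfilne
  have hδI : δ ∈ I := (Finset.mem_filter.mp hδmem).1
  have hδv : multiplicity q (Δ.coeff δ) = v := (Finset.mem_filter.mp hδmem).2
  have hδne0 : Δ.coeff δ ≠ 0 := Polynomial.mem_support_iff.mp hδI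
  have hδub : ∀ i' ∈ I.filter (fun i => multiplicity q (Δ.coeff i) = v), i' ≤ δ := by
    intro i' hi'
    rw [hδdef]
    exact Finset.le_max' _ _ hi'
  have hδ1 : 1 ≤ δ := by
    rcases Nat.eq_zero_or_pos δ with h | h
    · exact absurd (h ▸ hΔ0) hδne0
    · exact h
  have hv : ∀ i, q ^ v ∣ Δ.coeff i := by
    intro i
    by_cases hc : Δ.coeff i = 0
    · simp [hc]
    · refine (hfin hc).pow_dvd_iff_le_multiplicity.mpr ?_
      exact Finset.min'_le _ _ (Finset.mem_image_of_mem _ (Polynomial.mem_support_iff.mpr hc))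
  have hgt : ∀ i, δ < i → q ^ (v + 1) ∣ Δ.coeff i := by
    intro i hi
    by_cases hc : Δ.coeff i = 0
    · simp [hc]
    · have hiI : i ∈ I := Polynomial.mem_support_iff.mpr hc
      have hge : v ≤ multiplicity q (Δ.coeff i) :=
        Finset.min'_le _ _ (Finset.mem_image_of_mem _ hiI)
      have hne : multiplicity q (Δ.coeff i) ≠ v := by
        intro he
        have hile : i ≤ δ := hδub i (Finset.mem_filter.mpr ⟨hiI, he⟩)
        omega
      exact (hfin hc).pow_dvd_iff_le_multiplicity.mpr (by omega)
  -- the set J of nonzero coefficients of G, the minimum M, and its maximal attainer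
  set μ : ℕ → ℕ := fun j =>
    multiplicity q (G.coeff j) + (n - j) * multiplicity q u + j * v with hμdef
  set J := (Finset.range (n + 1)).filter (fun j => G.coeff j ≠ 0) with hJdef
  have hj0J : j0 ∈ J :=
    Finset.mem_filter.mpr ⟨Finset.mem_range.mpr (by omega), hG0⟩
  have hJne : (J.image μ).Nonempty := ⟨μ j0, Finset.mem_image_of_mem _ hj0J⟩
  set M := (J.image μ).min' hJne with hMdef
  obtain ⟨j1, hj1J, hj1μ⟩ := Finset.mem_image.mp (Finset.min'_mem _ hJne)
  have hJfilne : (J.filter fun j => μ j = M).Nonempty :=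
    ⟨j1, Finset.mem_filter.mpr ⟨hj1J, hj1μ⟩⟩
  set jh := (J.filter fun j => μ j = M).max' hJfilne with hjhdef
  have hjhmem := Finset.max'_mem _ hJfilne
  have hjhub : ∀ j' ∈ J.filter (fun j => μ j = M), j' ≤ jh := by
    intro j' hj'
    rw [hjhdef]
    exact Finset.le_max' _ _ hj'
  have hjhJ : jh ∈ J := (Finset.mem_filter.mp hjhmem).1
  have hjhμ : μ jh = M := (Finset.mem_filter.mp hjhmem).2
  have hjhn : jh ≤ n := by
    have := (Finset.mem_filter.mp hjhJ).1
    exact Nat.lt_succ_iff.mp (Finset.mem_range.mp this)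
  have hjhG : G.coeff jh ≠ 0 := (Finset.mem_filter.mp hjhJ).2
  have hMle : ∀ j ∈ J, M ≤ μ j := fun j hj =>
    Finset.min'_le _ _ (Finset.mem_image_of_mem _ hj)
  have μexp : ∀ j, μ j = multiplicity q (G.coeff j) + (n - j) * multiplicity q u + j * v :=
    fun j => rfl
  -- basic divisibilities
  have hdvd_t : q ^ (multiplicity q t) ∣ t := pow_multiplicity_dvd q t
  have hdvd_upow : ∀ k : ℕ, q ^ (k * multiplicity q u) ∣ u ^ k := by
    intro k
    have := pow_dvd_pow_of_dvd (pow_multiplicity_dvd q u) k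
    rwa [← pow_mul, mul_comm (multiplicity q u) k] at this
  have hdvd_G : ∀ j, q ^ (multiplicity q (G.coeff j)) ∣ G.coeff j := fun j =>
    pow_multiplicity_dvd q _
  -- the sum at ν = jh * δ
  set ν := jh * δ with hνdef
  set A := G.coeff jh * u ^ (n - jh) * (Δ.coeff δ) ^ jh with hAdef
  set Sν := ∑ j ∈ Finset.range (n + 1), G.coeff j * u ^ (n - j) * (Δ ^ j).coeff ν with hSdef
  have hjhrange : jh ∈ Finset.range (n + 1) := Finset.mem_range.mpr (by omega)
  have claim1 : q ^ (M + 1) ∣ Sν - A := by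
    rw [hSdef, ← Finset.add_sum_erase _ _ hjhrange]
    have hrw : G.coeff jh * u ^ (n - jh) * (Δ ^ jh).coeff ν
        + (∑ j ∈ (Finset.range (n + 1)).erase jh, G.coeff j * u ^ (n - j) * (Δ ^ j).coeff ν)
        - A
        = G.coeff jh * u ^ (n - jh) * ((Δ ^ jh).coeff ν - (Δ.coeff δ) ^ jh)
        + (∑ j ∈ (Finset.range (n + 1)).erase jh, G.coeff j * u ^ (n - j) * (Δ ^ j).coeff ν) := by
      rw [hAdef]; ring
    rw [hrw]
    refine dvd_add ?_ ?_
    · have hexp : M + 1 = (multiplicity q (G.coeff jh) + (n - jh) * multiplicity q u)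
          + (jh * v + 1) := by
        have h := (μexp jh).symm.trans hjhμ
        omega
      rw [hexp, pow_add, pow_add]
      exact mul_dvd_mul (mul_dvd_mul (hdvd_G jh) (hdvd_upow (n - jh)))
        (aux_L3 v δ hv hgt jh)
    · refine Finset.dvd_sum fun j hj => ?_
      have hjne : j ≠ jh := Finset.ne_of_mem_erase hj
      have hjrange : j ∈ Finset.range (n + 1) := Finset.mem_of_mem_erase hj
      have hjn : j ≤ n := Nat.lt_succ_iff.mp (Finset.mem_range.mp hjrange)
      by_cases hGj : G.coeff j = 0
      · simp [hGj]
      · have hjJ : j ∈ J := Finset.mem_filter.mpr ⟨hjrange, hGj⟩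
        rcases Nat.lt_or_ge j jh with hlt | hge
        · -- j < jh : use L2
          have hνgt : j * δ < ν := by
            rw [hνdef]
            exact (Nat.mul_lt_mul_right (by omega : 0 < δ)).mpr hlt
          have h1 : q ^ (μ j + 1) ∣ G.coeff j * u ^ (n - j) * (Δ ^ j).coeff ν := by
            have hexp : μ j + 1 = (multiplicity q (G.coeff j) + (n - j) * multiplicity q u)
                + (j * v + 1) := by have h := μexp j; omega
            rw [hexp, pow_add, pow_add]
            exact mul_dvd_mul (mul_dvd_mul (hdvd_G j) (hdvd_upow (n - j)))
              (aux_L2 v δ hv hgt j ν hνgt)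
          exact dvd_trans (pow_dvd_pow q (by have := hMle j hjJ; omega)) h1
        · -- jh < j : μ j ≥ M + 1
          have hjgt : jh < j := by omega
          have hμne : μ j ≠ M := by
            intro he
            have hjle : j ≤ jh := hjhub j (Finset.mem_filter.mpr ⟨hjJ, he⟩)
            omega
          have hμge : M + 1 ≤ μ j := by have := hMle j hjJ; omega
          have h1 : q ^ (μ j) ∣ G.coeff j * u ^ (n - j) * (Δ ^ j).coeff ν := by
            have hexp : μ j = (multiplicity q (G.coeff j) + (n - j) * multiplicity q u)
                + j * v := by have h := μexp j; omega
            rw [hexp, pow_add, pow_add]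
            exact mul_dvd_mul (mul_dvd_mul (hdvd_G j) (hdvd_upow (n - j)))
              (aux_L1 v hv j ν)
          exact dvd_trans (pow_dvd_pow q hμge) h1
  have hAne : A ≠ 0 := by
    rw [hAdef]
    exact mul_ne_zero (mul_ne_zero hjhG (pow_ne_zero _ hu)) (pow_ne_zero _ hδne0)
  have claim2 : ¬ q ^ (M + 1) ∣ A := by
    have hmulA : multiplicity q A = M := by
      rw [hAdef]
      rw [multiplicity_mul hq (hfin hAne)]
      rw [multiplicity_mul hq (hfin (mul_ne_zero hjhG (pow_ne_zero _ hu)))]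
      rw [(hfin hu).multiplicity_pow hq, (hfin hδne0).multiplicity_pow hq]
      rw [hδv]
      have h := (μexp jh).symm.trans hjhμ
      omega
    refine (hfin hAne).not_pow_dvd_of_multiplicity_lt ?_
    omega
  have claim3 : q ^ (multiplicity q t + n * multiplicity q u) ∣ Sν := by
    refine dvd_trans ?_ (H ν)
    rw [pow_add]
    exact mul_dvd_mul hdvd_t (hdvd_upow n)
  have key : multiplicity q t + n * multiplicity q u ≤ M := by
    by_contra hcon
    have hle : M + 1 ≤ multiplicity q t + n * multiplicity q u := by omega
    have h1 : q ^ (M + 1) ∣ Sν := dvd_trans (pow_dvd_pow q hle) claim3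
    have h2 : q ^ (M + 1) ∣ Sν - (Sν - A) := dvd_sub h1 claim1
    rw [sub_sub_cancel] at h2
    exact claim2 h2
  -- central numeric inequality
  have natkey : multiplicity q t + j0 * multiplicity q u
      ≤ multiplicity q (G.coeff j0) + j0 * v := by
    have h1 : M ≤ μ j0 := hMle j0 hj0J
    have h2 : n * multiplicity q u
        = (n - j0) * multiplicity q u + j0 * multiplicity q u := by
      rw [← add_mul]; congr 1; omega
    have h1' := μexp j0
    omega
  -- conclude, splitting on Φ
  by_cases hΦ0 : Φ = 0
  · rcases Nat.eq_zero_or_pos j0 with hj00 | hj0pos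
    · subst hj00
      have hnat : multiplicity q t ≤ multiplicity q (G.coeff 0) := by
        have := natkey; omega
      rw [pow_zero, mul_one, pow_zero, mul_one,
        (hfin ht).emultiplicity_eq_multiplicity, (hfin hG0).emultiplicity_eq_multiplicity]
      exact_mod_cast hnat
    · rw [hΦ0, zero_pow (by omega : j0 ≠ 0), mul_zero, emultiplicity_zero]
      exact le_top
  · have hΦv : v ≤ multiplicity q Φ := by
      refine (hfin hΦ0).le_multiplicity_of_pow_dvd ?_
      rw [hΦdef, Polynomial.eval_eq_sum_range]
      refine Finset.dvd_sum fun i _ => ?_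
      rw [one_pow, mul_one]
      exact hv i
    have hineq : multiplicity q t + j0 * multiplicity q u
        ≤ multiplicity q (G.coeff j0) + j0 * multiplicity q Φ := by
      have := Nat.mul_le_mul_left j0 hΦv
      omega
    have elhs : emultiplicity q (t * u ^ j0)
        = ((multiplicity q t + j0 * multiplicity q u : ℕ) : ℕ∞) := by
      rw [emultiplicity_mul hq, emultiplicity_pow hq,
        (hfin ht).emultiplicity_eq_multiplicity, (hfin hu).emultiplicity_eq_multiplicity]
      push_cast; ring
    have erhs : emultiplicity q (G.coeff j0 * Φ ^ j0)
        = ((multiplicity q (G.coeff j0) + j0 * multiplicity q Φ : ℕ) : ℕ∞) := by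
      rw [emultiplicity_mul hq, emultiplicity_pow hq,
        (hfin hG0).emultiplicity_eq_multiplicity, (hfin hΦ0).emultiplicity_eq_multiplicity]
      push_cast; ring
    rw [elhs, erhs]
    exact Nat.cast_le.mpr hineq

/-! ### Localization setup -/

section Loc

open Polynomial

variable {B : Type*} [CommRing B] [IsDomain B] (R : Subring B)

theorem nonzero_le : nonzeroSubmonoid R ≤ nonZeroDivisors B := fun _ hx =>
  mem_nonZeroDivisors_of_ne_zero hx.2

noncomputable instance instDomLoc : IsDomain (Localization (nonzeroSubmonoid R)) :=
  IsLocalization.isDomain_localization (nonzero_le R)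

theorem phi_inj : Function.Injective (algebraMap B (Localization (nonzeroSubmonoid R))) :=
  IsLocalization.injective _ (nonzero_le R)

variable (E : GaAction B) (hER : ∀ x ∈ R, E.toRingHom x = Polynomial.C x)

/-- The lifted ring hom on the localization. -/
noncomputable def liftF : Localization (nonzeroSubmonoid R) →+*
    Polynomial (Localization (nonzeroSubmonoid R)) := by
  refine IsLocalization.lift (M := nonzeroSubmonoid R)
    (g := (Polynomial.mapRingHom (algebraMap B (Localization (nonzeroSubmonoid R)))).comp
      E.toRingHom) ?_
  intro s
  have h1 : E.toRingHom s = Polynomial.C (s : B) := hER s s.2.1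
  have h2 : (Polynomial.mapRingHom (algebraMap B (Localization (nonzeroSubmonoid R)))).comp
      E.toRingHom s = Polynomial.C (algebraMap B (Localization (nonzeroSubmonoid R)) s) := by
    simp [h1]
  rw [h2]
  exact (IsLocalization.map_units (Localization (nonzeroSubmonoid R)) s).map
    (Polynomial.C : Localization (nonzeroSubmonoid R) →+* _)

theorem liftF_eq (b : B) :
    liftF R E hER (algebraMap B (Localization (nonzeroSubmonoid R)) b)
      = Polynomial.map (algebraMap B (Localization (nonzeroSubmonoid R))) (E.toRingHom b) :=
  IsLocalization.lift_eq _ b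

end Loc

section Loc2

open Polynomial

variable {B : Type*} [CommRing B] [IsDomain B] {R : Subring B}
variable (E : GaAction B) (hER : ∀ x ∈ R, E.toRingHom x = Polynomial.C x)

local notation "L" => Localization (nonzeroSubmonoid R)
local notation "φ" => algebraMap B (Localization (nonzeroSubmonoid R))

theorem liftF_eval_zero : ∀ z, ((liftF R E hER) z).eval 0 = z := by
  have key : (Polynomial.evalRingHom (0 : L)).comp (liftF R E hER) = RingHom.id L := by
    refine IsLocalization.ringHom_ext (nonzeroSubmonoid R) (RingHom.ext fun b => ?_)
    simp only [RingHom.comp_apply, RingHom.id_apply, coe_evalRingHom]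
    rw [liftF_eq, Polynomial.eval_map, Polynomial.eval₂_at_zero,
      Polynomial.coeff_zero_eq_eval_zero, E.eval_zero b]
  intro z
  have h := congrArg (fun f => f z) key
  simpa using h

theorem liftF_coassoc : ∀ z,
    Polynomial.eval₂ (Polynomial.C.comp Polynomial.C)
      (Polynomial.C Polynomial.X + Polynomial.X) ((liftF R E hER) z)
    = Polynomial.map (liftF R E hER) ((liftF R E hER) z) := by
  set F := liftF R E hER with hF
  have key : (Polynomial.eval₂RingHom (R := L) (S := Polynomial (Polynomial L))
        ((Polynomial.C.comp Polynomial.C : L →+* Polynomial (Polynomial L)))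
        (Polynomial.C Polynomial.X + Polynomial.X)).comp F
      = (Polynomial.mapRingHom F).comp F := by
    refine IsLocalization.ringHom_ext (nonzeroSubmonoid R) (RingHom.ext fun b => ?_)
    simp only [RingHom.comp_apply, coe_eval₂RingHom, coe_mapRingHom]
    rw [liftF_eq]
    have hL : Polynomial.eval₂ (Polynomial.C.comp Polynomial.C)
        (Polynomial.C Polynomial.X + Polynomial.X)
        (Polynomial.map φ (E.toRingHom b))
        = Polynomial.eval₂ ((Polynomial.C.comp Polynomial.C).comp φ)
          (Polynomial.C Polynomial.X + Polynomial.X) (E.toRingHom b) :=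
      Polynomial.eval₂_map φ _ _
    have hcoassoc := E.coassoc b
    have hΨ := congrArg (Polynomial.mapRingHom (Polynomial.mapRingHom φ)) hcoassoc
    rw [Polynomial.coe_mapRingHom] at hΨ
    have hL2 : Polynomial.map (Polynomial.mapRingHom φ)
        (Polynomial.eval₂ (Polynomial.C.comp Polynomial.C)
          (Polynomial.C Polynomial.X + Polynomial.X) (E.toRingHom b))
        = Polynomial.eval₂
            ((Polynomial.mapRingHom (Polynomial.mapRingHom φ)).comp
              (Polynomial.C.comp Polynomial.C))
            (Polynomial.mapRingHom (Polynomial.mapRingHom φ)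
              (Polynomial.C Polynomial.X + Polynomial.X))
            (E.toRingHom b) := by
      rw [← Polynomial.coe_mapRingHom]
      exact Polynomial.hom_eval₂ _ _ _ _
    have hcomp : (Polynomial.mapRingHom (Polynomial.mapRingHom φ)).comp
        (Polynomial.C.comp Polynomial.C)
        = ((Polynomial.C.comp Polynomial.C).comp φ : B →+* Polynomial (Polynomial L)) := by
      ext x
      simp
    have hXval : Polynomial.mapRingHom (Polynomial.mapRingHom φ)
        (Polynomial.C Polynomial.X + Polynomial.X)
        = Polynomial.C Polynomial.X + Polynomial.X := by
      simp
    have hR2 : Polynomial.map (Polynomial.mapRingHom φ)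
        (Polynomial.map E.toRingHom (E.toRingHom b))
        = Polynomial.map ((Polynomial.mapRingHom φ).comp E.toRingHom) (E.toRingHom b) := by
      rw [Polynomial.map_map]
    have hFcomp : F.comp φ = (Polynomial.mapRingHom φ).comp E.toRingHom :=
      IsLocalization.lift_comp _
    have hR3 : Polynomial.map F (Polynomial.map φ (E.toRingHom b))
        = Polynomial.map ((Polynomial.mapRingHom φ).comp E.toRingHom) (E.toRingHom b) := by
      rw [Polynomial.map_map, hFcomp]
    rw [hL2, hcomp, hXval, hR2] at hΨ
    rw [hL, hΨ, hR3]
  intro z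
  have h := congrArg (fun f => f z) key
  simpa using h

/-- The induced `Ga`-action on the localization. -/
noncomputable def FGa : GaAction L where
  toRingHom := liftF R E hER
  eval_zero := liftF_eval_zero E hER
  coassoc := liftF_coassoc E hER

end Loc2

/-! ### The core lemma on the localization -/

section CoreLoc

open Polynomial

variable {B : Type*} [CommRing B] [IsDomain B] [UniqueFactorizationMonoid B] {R : Subring B}

local notation "L" => Localization (nonzeroSubmonoid R)
local notation "φ" => algebraMap B (Localization (nonzeroSubmonoid R))

theorem core_loc {g d : Polynomial L} (hd0 : d.coeff 0 = 0) (hdne : d ≠ 0)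
    (H : ∀ ν, (g.comp d).coeff ν ∈ Set.range φ) :
    ∀ j, g.coeff j * (d.eval 1) ^ j ∈ Set.range φ := by
  intro j
  set n := g.natDegree with hn
  by_cases hjn : j ≤ n
  swap
  · rw [coeff_eq_zero_of_natDegree_lt (by omega), zero_mul]
    exact ⟨0, map_zero _⟩
  obtain ⟨tg, htgM, hG⟩ := IsLocalization.integerNormalization_spec (nonzeroSubmonoid R) g
  obtain ⟨u, huM, hΔ⟩ := IsLocalization.integerNormalization_spec (nonzeroSubmonoid R) d
  set G := IsLocalization.integerNormalization (nonzeroSubmonoid R) g with hGdef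
  set Δ := IsLocalization.integerNormalization (nonzeroSubmonoid R) d with hΔdef
  have htg0 : (tg : B) ≠ 0 := htgM.2
  have hu0 : (u : B) ≠ 0 := huM.2
  have hGcoeff : ∀ i, φ (G.coeff i) = φ tg * g.coeff i := by
    intro i; rw [← coeff_map, hG, coeff_smul, Algebra.smul_def]
  have hΔcoeff : ∀ i, φ (Δ.coeff i) = φ u * d.coeff i := by
    intro i; rw [← coeff_map, hΔ, coeff_smul, Algebra.smul_def]
  have hGdeg : G.natDegree ≤ n := by
    rw [Polynomial.natDegree_le_iff_coeff_eq_zero]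
    intro m hm
    apply phi_inj R
    rw [hGcoeff m, coeff_eq_zero_of_natDegree_lt (by omega), mul_zero, map_zero]
  have hmapΔ : Polynomial.map φ Δ = Polynomial.C (φ u) * d := by
    ext i
    rw [coeff_map, hΔcoeff i, coeff_C_mul]
  have hΔ0' : Δ.coeff 0 = 0 := by
    apply phi_inj R
    rw [hΔcoeff 0, hd0, mul_zero, map_zero]
  have hΔne' : Δ ≠ 0 := by
    intro hzz
    apply hdne
    have h2 : Polynomial.C (φ u) * d = 0 := by rw [← hmapΔ, hzz, Polynomial.map_zero]
    rcases mul_eq_zero.mp h2 with h3 | h3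
    · exact absurd h3 (by
        simp only [Polynomial.C_eq_zero]
        exact fun hh => hu0 (phi_inj R (by rw [hh, map_zero])))
    · exact h3
  have hpowcoeff : ∀ (k ν : ℕ), φ ((Δ ^ k).coeff ν) = (φ u) ^ k * (d ^ k).coeff ν := by
    intro k ν
    have hmk : Polynomial.map φ (Δ ^ k) = Polynomial.C ((φ u) ^ k) * d ^ k := by
      rw [Polynomial.map_pow, hmapΔ, mul_pow, ← Polynomial.C_pow]
    have h2 : (Polynomial.map φ (Δ ^ k)).coeff ν
        = (Polynomial.C ((φ u) ^ k) * d ^ k).coeff ν := by rw [hmk]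
    rwa [coeff_map, coeff_C_mul] at h2
  have hcompcoeff : ∀ ν, (g.comp d).coeff ν
      = ∑ k ∈ Finset.range (n + 1), g.coeff k * (d ^ k).coeff ν := by
    intro ν
    have hcomp : g.comp d = ∑ k ∈ Finset.range (n + 1), Polynomial.C (g.coeff k) * d ^ k := by
      rw [Polynomial.comp_eq_sum_left, g.sum_over_range' (by simp) (n + 1) (by omega)]
    rw [hcomp, Polynomial.finset_sum_coeff]
    exact Finset.sum_congr rfl fun k _ => by rw [coeff_C_mul]
  have H' : ∀ ν : ℕ, (tg : B) * (u : B) ^ n ∣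
      ∑ k ∈ Finset.range (n + 1), G.coeff k * (u : B) ^ (n - k) * (Δ ^ k).coeff ν := by
    intro ν
    obtain ⟨β, hβ⟩ := H ν
    refine Dvd.intro β ?_
    apply phi_inj R
    rw [map_sum, map_mul, map_mul, map_pow]
    have hterm : ∀ k ∈ Finset.range (n + 1),
        φ (G.coeff k * (u : B) ^ (n - k) * (Δ ^ k).coeff ν)
        = (φ tg * (φ u) ^ n) * (g.coeff k * (d ^ k).coeff ν) := by
      intro k hk
      have hkn : k ≤ n := Nat.lt_succ_iff.mp (Finset.mem_range.mp hk)
      have hpow : (φ u : L) ^ (n - k) * (φ u) ^ k = (φ u) ^ n := by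
        rw [← pow_add]; congr 1; omega
      rw [map_mul, map_mul, hGcoeff k, map_pow, hpowcoeff k ν, ← hpow]
      ring
    rw [Finset.sum_congr rfl hterm, ← Finset.mul_sum, ← hcompcoeff ν, hβ]
  obtain ⟨w, hw⟩ := aux_coreB htg0 hu0 hΔ0' hΔne' hGdeg H' j hjn
  have hΦ : φ (Δ.eval 1) = φ u * d.eval 1 := by
    have h2 := congrArg (Polynomial.eval 1) hmapΔ
    rwa [Polynomial.eval_map, Polynomial.eval₂_at_one, Polynomial.eval_mul,
      Polynomial.eval_C] at h2
  have hmain : φ tg * (φ u) ^ j * (g.coeff j * (d.eval 1) ^ j)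
      = φ tg * (φ u) ^ j * φ w := by
    have h1 := congrArg (φ) hw
    rw [map_mul, map_mul, map_mul, map_pow, map_pow, hGcoeff j, hΦ] at h1
    calc φ tg * (φ u) ^ j * (g.coeff j * (d.eval 1) ^ j)
        = φ tg * g.coeff j * (φ u * d.eval 1) ^ j := by ring
      _ = φ tg * (φ u) ^ j * φ w := by rw [h1]
  have hcancel : (φ tg * (φ u) ^ j : L) ≠ 0 := by
    apply mul_ne_zero
    · exact fun hh => htg0 (phi_inj R (by rw [hh, map_zero]))
    · exact pow_ne_zero _ fun hh => hu0 (phi_inj R (by rw [hh, map_zero]))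
  exact ⟨w, (mul_left_cancel₀ hcancel hmain).symm⟩

end CoreLoc

/-! ### Composition with `C c * X` -/

open Polynomial in
theorem aux_coeff_comp_C_mul_X {L : Type*} [CommRing L] (G : Polynomial L) (c : L) (i : ℕ) :
    (G.comp (Polynomial.C c * Polynomial.X)).coeff i = G.coeff i * c ^ i := by
  have hcomp : G.comp (Polynomial.C c * Polynomial.X)
      = ∑ e ∈ Finset.range (G.natDegree + 1),
          Polynomial.C (G.coeff e * c ^ e) * Polynomial.X ^ e := by
    rw [Polynomial.comp_eq_sum_left, G.sum_over_range' (by simp) (G.natDegree + 1)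
      (lt_add_one _)]
    refine Finset.sum_congr rfl fun e _ => ?_
    rw [mul_pow, ← Polynomial.C_pow, map_mul]
    ring
  rw [hcomp, Polynomial.finset_sum_coeff]
  have hterm : ∀ e ∈ Finset.range (G.natDegree + 1),
      (Polynomial.C (G.coeff e * c ^ e) * Polynomial.X ^ e).coeff i
      = if i = e then G.coeff i * c ^ i else 0 := by
    intro e _
    rw [Polynomial.coeff_C_mul, Polynomial.coeff_X_pow]
    by_cases he : i = e
    · subst he; simp
    · simp [he]
  rw [Finset.sum_congr rfl hterm, Finset.sum_ite_eq (Finset.range (G.natDegree + 1)) i]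
  by_cases hi : i ∈ Finset.range (G.natDegree + 1)
  · rw [if_pos hi]
  · rw [if_neg hi]
    have : G.coeff i = 0 :=
      Polynomial.coeff_eq_zero_of_natDegree_lt (by
        simp only [Finset.mem_range, not_lt] at hi; omega)
    rw [this, zero_mul]

/-! ### Main theorem -/

/-- non-exponentiality criterion.  `B` is a UFD containing a field of
characteristic `p > 0`, `R` a subring of `B`, `S = R \ {0}`, and `σ ≠ id` is an
automorphism of `B` which, on `B_S = A[r]` (a polynomial ring over a subring `A ⊇ k
= Frac R`), extends to the `A`-automorphism `σ̃ : r ↦ r + f` with `f = σ̃(r) − r ∈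
A \ {0}`.  If `A` is `f`-stable over `k` and `σ` is exponential over `R`, then the
`Ga`-action `Ẽ : h(r) ↦ h(r + fT)` on `B_S` restricts to `B`. -/
theorem stmt10 {kk B : Type*} [Field kk] [CommRing B] [IsDomain B] [Algebra kk B]
    [UniqueFactorizationMonoid B] (p : ℕ) [Fact p.Prime] [CharP B p]
    (R : Subring B)
    (σ : B ≃+* B) (hσne : σ ≠ RingEquiv.refl B)
    (A : Subring (Localization (nonzeroSubmonoid R)))
    (hk : ∀ x y : B, x ∈ R → y ∈ R → y ≠ 0 →
      ∀ z : Localization (nonzeroSubmonoid R),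
        z * algebraMap B (Localization (nonzeroSubmonoid R)) y
          = algebraMap B (Localization (nonzeroSubmonoid R)) x → z ∈ A)
    (r : Localization (nonzeroSubmonoid R))
    (hbij : Function.Bijective
      (fun h : Polynomial A => Polynomial.eval₂ A.subtype r h))
    (σt : Localization (nonzeroSubmonoid R) ≃+* Localization (nonzeroSubmonoid R))
    (hσt : ∀ b : B, σt (algebraMap B (Localization (nonzeroSubmonoid R)) b)
      = algebraMap B (Localization (nonzeroSubmonoid R)) (σ b))
    (hσtA : ∀ a ∈ A, σt a = a)
    (hfA : σt r - r ∈ A) (hfne : σt r - r ≠ 0)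
    (hstable : ∀ F : GaAction (Localization (nonzeroSubmonoid R)),
      (∀ x y : B, x ∈ R → y ∈ R → y ≠ 0 →
        ∀ z : Localization (nonzeroSubmonoid R),
          z * algebraMap B (Localization (nonzeroSubmonoid R)) y
            = algebraMap B (Localization (nonzeroSubmonoid R)) x →
          F.toRingHom z = Polynomial.C z) →
      (∀ z, (F.toRingHom z).eval 1 = σt z) →
      ∀ z, F.toRingHom z = Polynomial.C z ↔ z ∈ A)
    (hexp : ∃ E : GaAction B,
      (∀ x ∈ R, E.toRingHom x = Polynomial.C x) ∧
      ∀ b, (E.toRingHom b).eval 1 = σ b) :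
    ∀ (h : Polynomial A) (b : B),
      Polynomial.eval₂ A.subtype r h
        = algebraMap B (Localization (nonzeroSubmonoid R)) b →
      ∀ i : ℕ,
        (Polynomial.eval₂ (Polynomial.C.comp A.subtype)
          (Polynomial.C r + Polynomial.C (σt r - r) * Polynomial.X) h).coeff i
          ∈ Set.range (algebraMap B (Localization (nonzeroSubmonoid R))) := by
  classical
  obtain ⟨E, hER, hE1⟩ := hexp
  set φ' := algebraMap B (Localization (nonzeroSubmonoid R)) with hφ'
  set F0 := liftF R E hER with hF0
  have hFb : ∀ b : B, F0 (φ' b) = Polynomial.map φ' (E.toRingHom b) := fun b =>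
    liftF_eq R E hER b
  -- evaluation at 1 agrees with σt
  have hev1 : ∀ z, (F0 z).eval 1 = σt z := by
    have key : (Polynomial.evalRingHom (1 : (Localization (nonzeroSubmonoid R)))).comp F0 = (σt : (Localization (nonzeroSubmonoid R)) →+* (Localization (nonzeroSubmonoid R))) := by
      refine IsLocalization.ringHom_ext (nonzeroSubmonoid R) (RingHom.ext fun b => ?_)
      simp only [RingHom.comp_apply, Polynomial.coe_evalRingHom, RingHom.coe_coe]
      rw [hFb, Polynomial.eval_map, Polynomial.eval₂_at_one, hE1 b, hσt b]
    intro z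
    have h := congrArg (fun f => f z) key
    simpa using h
  -- F0 fixes the fractions
  have hfrac : ∀ x y : B, x ∈ R → y ∈ R → y ≠ 0 →
      ∀ z : (Localization (nonzeroSubmonoid R)), z * φ' y = φ' x → F0 z = Polynomial.C z := by
    intro x y hx hy hy0 z hz
    have hCy : (Polynomial.C (φ' y) : Polynomial (Localization (nonzeroSubmonoid R))) ≠ 0 := by
      rw [Ne, Polynomial.C_eq_zero]
      exact fun hh => hy0 (phi_inj R (by rw [hh, map_zero]))
    have h1 : F0 (φ' y) = Polynomial.C (φ' y) := by
      rw [hFb, hER y hy, Polynomial.map_C]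
    have h2 : F0 z * Polynomial.C (φ' y) = Polynomial.C z * Polynomial.C (φ' y) := by
      calc F0 z * Polynomial.C (φ' y) = F0 (z * φ' y) := by rw [map_mul, h1]
        _ = F0 (φ' x) := by rw [hz]
        _ = Polynomial.C (φ' x) := by rw [hFb, hER x hx, Polynomial.map_C]
        _ = Polynomial.C (z * φ' y) := by rw [hz]
        _ = Polynomial.C z * Polynomial.C (φ' y) := by rw [map_mul]
    exact mul_right_cancel₀ hCy h2
  -- apply stability to the induced Ga-action
  have hfix := hstable (FGa E hER) hfrac hev1
  have hA : ∀ a : A, F0 ((A.subtype : A →+* (Localization (nonzeroSubmonoid R))) a) = Polynomial.C (A.subtype a) :=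
    fun a => (hfix _).mpr a.2
  -- the polynomial d
  set d := F0 r - Polynomial.C r with hd
  have hd0 : d.coeff 0 = 0 := by
    rw [hd, Polynomial.coeff_sub, Polynomial.coeff_zero_eq_eval_zero,
      liftF_eval_zero E hER r, Polynomial.coeff_C_zero, sub_self]
  have hdne : d ≠ 0 := by
    rw [hd, Ne, sub_eq_zero]
    intro heq
    exact hfne (sub_eq_zero_of_eq (hσtA r ((hfix r).mp heq)))
  have hdeval : d.eval 1 = σt r - r := by
    rw [hd, Polynomial.eval_sub, hev1 r, Polynomial.eval_C]
  intro h b hhb i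
  -- the coefficients of h(r + d) lie in the image of B
  have hkey : ∀ ν, (Polynomial.eval₂ (Polynomial.C.comp A.subtype)
      (Polynomial.C r + d) h).coeff ν ∈ Set.range φ' := by
    intro ν
    have h1 : F0 (Polynomial.eval₂ A.subtype r h)
        = Polynomial.eval₂ (F0.comp A.subtype) (F0 r) h := Polynomial.hom_eval₂ _ _ _ _
    have h2 : F0.comp (A.subtype : A →+* (Localization (nonzeroSubmonoid R)))
        = (Polynomial.C : (Localization (nonzeroSubmonoid R)) →+* Polynomial (Localization (nonzeroSubmonoid R))).comp A.subtype :=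
      RingHom.ext fun a => hA a
    have h3 : F0 r = Polynomial.C r + d := by rw [hd]; ring
    have h4 : Polynomial.eval₂ (Polynomial.C.comp A.subtype) (Polynomial.C r + d) h
        = Polynomial.map φ' (E.toRingHom b) := by
      rw [← h3]
      have : Polynomial.eval₂ ((Polynomial.C : (Localization (nonzeroSubmonoid R)) →+* Polynomial (Localization (nonzeroSubmonoid R))).comp A.subtype)
          (F0 r) h = Polynomial.eval₂ (F0.comp A.subtype) (F0 r) h := by rw [h2]
      rw [this, ← h1, hhb, hFb]
    rw [h4, Polynomial.coeff_map]
    exact ⟨_, rfl⟩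
  -- rewrite via composition with g
  set hm := h.map (A.subtype : A →+* (Localization (nonzeroSubmonoid R))) with hhm
  set g := hm.comp (Polynomial.X + Polynomial.C r) with hg
  have hcompid : ∀ w : Polynomial (Localization (nonzeroSubmonoid R)), g.comp w
      = Polynomial.eval₂ (Polynomial.C.comp A.subtype) (Polynomial.C r + w) h := by
    intro w
    rw [hg, Polynomial.comp_assoc]
    have h5 : (Polynomial.X + Polynomial.C r).comp w = w + Polynomial.C r := by
      simp [Polynomial.add_comp]
    rw [h5]
    have h6 : hm.comp (w + Polynomial.C r)
        = Polynomial.eval₂ Polynomial.C (w + Polynomial.C r) hm := rfl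
    rw [h6, hhm, Polynomial.eval₂_map, add_comm w (Polynomial.C r)]
  -- apply the core lemma
  have hcore := core_loc (g := g) hd0 hdne (by
    intro ν
    rw [hcompid d]
    exact hkey ν) i
  rw [hdeval] at hcore
  have hgoal : (Polynomial.eval₂ (Polynomial.C.comp A.subtype)
      (Polynomial.C r + Polynomial.C (σt r - r) * Polynomial.X) h).coeff i
      = g.coeff i * (σt r - r) ^ i := by
    rw [← hcompid (Polynomial.C (σt r - r) * Polynomial.X),
      aux_coeff_comp_C_mul_X g (σt r - r) i]
  rw [hgoal]
  exact hcore
end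

section
/- Let k be a field, and let τ and φ = (f1,…,fn) be k-algebra automorphisms of k[x1,…,xn] such that τ(A_i) ⊆ A_i for i = 1,…,n−1, where A_i := k[f1,…,fi] and A_0 := k. Then τ(f_i) ∈ k^× f_i + A_{i−1} for every i = 1,…,n. If moreover k has characteristic p > 0 and τ has order p, then τ(f_i) ∈ f_i + A_{i−1} for every i = 1,…,n. -/
open MvPolynomial

namespace Stmt15Aux

variable {k : Type*} [Field k] {n : ℕ}

noncomputable def Phi (k : Type*) [Field k] {n : ℕ} (i : Fin n) :
    MvPolynomial (Fin n) k ≃ₐ[k] Polynomial (MvPolynomial {j : Fin n // j ≠ i} k) :=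
  (renameEquiv k (Equiv.optionSubtypeNe i).symm).trans (optionEquivLeft k {j : Fin n // j ≠ i})

lemma Phi_X_self (i : Fin n) : Phi k i (X i) = Polynomial.X := by
  simp [Phi, Equiv.optionSubtypeNe_symm_self, optionEquivLeft_X_none]

lemma Phi_X_ne {i j : Fin n} (h : j ≠ i) :
    Phi k i (X j) = Polynomial.C (X ⟨j, h⟩) := by
  simp [Phi, Equiv.optionSubtypeNe_symm_of_ne h, optionEquivLeft_X_some]

noncomputable def SAlg (k : Type*) [Field k] (n m : ℕ) :
    Subalgebra k (MvPolynomial (Fin n) k) :=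
  MvPolynomial.supported k {j : Fin n | (j : ℕ) < m}

noncomputable def TAlg (k : Type*) [Field k] {n : ℕ} (i : Fin n) :
    Subalgebra k (MvPolynomial {j : Fin n // j ≠ i} k) :=
  MvPolynomial.supported k {j : {j : Fin n // j ≠ i} | ((j : Fin n) : ℕ) < (i : ℕ)}

/-- polynomials all of whose coefficients lie in a subalgebra -/
def coeffsIn (A : Subalgebra k (MvPolynomial {j : Fin n // j ≠ i} k)) :
    Subalgebra k (Polynomial (MvPolynomial {j : Fin n // j ≠ i} k)) where
  carrier := {p | ∀ j, p.coeff j ∈ A}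
  add_mem' ha hb j := by simpa using add_mem (ha j) (hb j)
  mul_mem' {a b} ha hb j := by
    rw [Polynomial.coeff_mul]
    exact Subalgebra.sum_mem _ fun x _ => mul_mem (ha x.1) (hb x.2)
  one_mem' j := by
    simp only [Polynomial.coeff_one]
    split
    · exact one_mem _
    · exact zero_mem _
  algebraMap_mem' c j := by
    rw [Polynomial.algebraMap_apply, Polynomial.coeff_C]
    split
    · rw [algebraMap_eq]; exact Subalgebra.algebraMap_mem _ c
    · exact zero_mem _

lemma mem_S_iff (i : Fin n) (p : MvPolynomial (Fin n) k) :
    p ∈ SAlg k n (i : ℕ) ↔ ∃ t ∈ TAlg k i, Phi k i p = Polynomial.C t := by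
  constructor
  · intro hp
    have h1 : Subalgebra.map (Phi k i).toAlgHom (SAlg k n (i : ℕ)) ≤
        Subalgebra.map (Polynomial.CAlgHom (R := k)) (TAlg k i) := by
      rw [SAlg, supported, AlgHom.map_adjoin]
      rw [Algebra.adjoin_le_iff]
      rintro q ⟨q', ⟨j, hj, rfl⟩, rfl⟩
      have hji : j ≠ i := by
        rintro rfl; simp at hj
      refine ⟨X ⟨j, hji⟩, ?_, ?_⟩
      · exact X_mem_supported.2 hj
      · exact (Phi_X_ne hji).symm
    obtain ⟨t, ht, ht2⟩ := h1 ⟨p, hp, rfl⟩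
    exact ⟨t, ht, ht2.symm⟩
  · rintro ⟨t, ht, hPhi⟩
    have : Subalgebra.map ((Phi k i).symm.toAlgHom.comp (Polynomial.CAlgHom (R := k)))
        (TAlg k i) ≤ SAlg k n (i : ℕ) := by
      rw [TAlg, supported, AlgHom.map_adjoin, Algebra.adjoin_le_iff]
      rintro q ⟨q', ⟨j, hj, rfl⟩, rfl⟩
      have : (Phi k i).symm (Polynomial.C (X j)) = X (j : Fin n) := by
        rw [← Phi_X_ne j.2, AlgEquiv.symm_apply_apply]
      simp only [AlgHom.coe_comp, Function.comp_apply, AlgEquiv.coe_algHom]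
      rw [show (Polynomial.CAlgHom (R := k) (X j)) = Polynomial.C (X j) from rfl, this]
      exact X_mem_supported.2 hj
    have hp : p = (Phi k i).symm (Polynomial.C t) := by
      rw [← hPhi, AlgEquiv.symm_apply_apply]
    rw [hp]
    exact this ⟨t, ht, rfl⟩

lemma mem_S1_iff (i : Fin n) (p : MvPolynomial (Fin n) k) :
    p ∈ SAlg k n ((i : ℕ) + 1) ↔ ∀ j, (Phi k i p).coeff j ∈ TAlg k i := by
  constructor
  · intro hp
    have h1 : Subalgebra.map (Phi k i).toAlgHom (SAlg k n ((i : ℕ) + 1)) ≤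
        coeffsIn (TAlg k i) := by
      rw [SAlg, supported, AlgHom.map_adjoin, Algebra.adjoin_le_iff]
      rintro q ⟨q', ⟨j, hj, rfl⟩, rfl⟩
      by_cases hji : j = i
      · subst hji
        intro l
        rw [AlgEquiv.coe_algHom, Phi_X_self, Polynomial.coeff_X]
        split
        · exact one_mem _
        · exact zero_mem _
      · intro l
        rw [AlgEquiv.coe_algHom, Phi_X_ne hji, Polynomial.coeff_C]
        split
        · exact X_mem_supported.2 (by
            have : (j : ℕ) ≠ (i : ℕ) := fun h => hji (Fin.ext h)
            exact lt_of_le_of_ne (Nat.lt_succ_iff.1 hj) this)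
        · exact zero_mem _
    exact h1 ⟨p, hp, rfl⟩
  · intro h
    have hrepr : p = (Phi k i).symm (Phi k i p) := (AlgEquiv.symm_apply_apply _ _).symm
    rw [hrepr, (Phi k i p).as_sum_range_C_mul_X_pow, map_sum]
    refine Subalgebra.sum_mem _ fun j _ => ?_
    rw [map_mul, map_pow]
    have hX : (Phi k i).symm Polynomial.X = X i := by
      rw [← Phi_X_self i, AlgEquiv.symm_apply_apply]
    rw [hX]
    refine mul_mem ?_ (pow_mem (X_mem_supported.2 (by simp)) _)
    have : (Phi k i).symm (Polynomial.C ((Phi k i p).coeff j)) ∈ SAlg k n (i : ℕ) := by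
      rw [mem_S_iff]
      exact ⟨_, h j, by rw [AlgEquiv.apply_symm_apply]⟩
    exact supported_mono (fun x hx => Nat.lt_succ_of_lt hx) this

end Stmt15Aux

namespace Stmt15Aux2
open Stmt15Aux

variable {k : Type*} [Field k] {n : ℕ}

lemma X_not_mem_S (i : Fin n) : X i ∉ SAlg k n (i : ℕ) := by
  intro h
  obtain ⟨t, _, ht⟩ := (mem_S_iff i _).1 h
  rw [Phi_X_self] at ht
  have := congrArg (fun q => Polynomial.coeff q 1) ht
  simp [Polynomial.coeff_X, Polynomial.coeff_C] at this

variable (σ : MvPolynomial (Fin n) k ≃ₐ[k] MvPolynomial (Fin n) k) (i : Fin n)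

/-- if `σ` maps `S_i` into itself and `σ (X i)` lands in `S_i`, then `σ` maps all of
`S_{i+1}` into `S_i`. -/
lemma sigma_S1_le_S (hm : ∀ q ∈ SAlg k n (i : ℕ), σ q ∈ SAlg k n (i : ℕ))
    (hXi : σ (X i) ∈ SAlg k n (i : ℕ)) :
    ∀ q ∈ SAlg k n ((i : ℕ) + 1), σ q ∈ SAlg k n (i : ℕ) := by
  intro q hq
  have h1 : Subalgebra.map σ.toAlgHom (SAlg k n ((i : ℕ) + 1)) ≤ SAlg k n (i : ℕ) := by
    rw [SAlg, supported, AlgHom.map_adjoin, Algebra.adjoin_le_iff]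
    rintro q' ⟨q'', ⟨j, hj, rfl⟩, rfl⟩
    by_cases hji : j = i
    · subst hji; exact hXi
    · have : (j : ℕ) < (i : ℕ) := by
        have : (j : ℕ) ≠ (i : ℕ) := fun h => hji (Fin.ext h)
        exact lt_of_le_of_ne (Nat.lt_succ_iff.1 hj) this
      exact hm _ (X_mem_supported.2 this)
  exact h1 ⟨q, hq, rfl⟩

lemma d_pos (hm : ∀ q ∈ SAlg k n (i : ℕ), σ q ∈ SAlg k n (i : ℕ))
    (hm1 : ∀ q ∈ SAlg k n ((i : ℕ) + 1), σ q ∈ SAlg k n ((i : ℕ) + 1))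
    (hb : ∃ b ∈ SAlg k n ((i : ℕ) + 1), σ b = X i) :
    0 < (Phi k i (σ (X i))).natDegree := by
  by_contra hd
  push_neg at hd
  interval_cases hdeg : (Phi k i (σ (X i))).natDegree
  have hXi : σ (X i) ∈ SAlg k n (i : ℕ) := by
    rw [mem_S_iff]
    refine ⟨(Phi k i (σ (X i))).coeff 0, ?_, Polynomial.eq_C_of_natDegree_eq_zero hdeg⟩
    have : σ (X i) ∈ SAlg k n ((i : ℕ) + 1) :=
      hm1 _ (X_mem_supported.2 (Nat.lt_succ_self _))
    exact (mem_S1_iff i _).1 this 0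
  obtain ⟨b, hb1, hb2⟩ := hb
  exact X_not_mem_S i (hb2 ▸ sigma_S1_le_S σ i hm hXi b hb1)

/-- key degree multiplicativity -/
lemma deg_mul (hm : ∀ q ∈ SAlg k n (i : ℕ), σ q ∈ SAlg k n (i : ℕ))
    (hm1 : ∀ q ∈ SAlg k n ((i : ℕ) + 1), σ q ∈ SAlg k n ((i : ℕ) + 1))
    (hd : 0 < (Phi k i (σ (X i))).natDegree) :
    ∀ e : ℕ, ∀ p ∈ SAlg k n ((i : ℕ) + 1), (Phi k i p).natDegree ≤ e →
      (Phi k i (σ p)).natDegree = (Phi k i (σ (X i))).natDegree * (Phi k i p).natDegree := by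
  set d := (Phi k i (σ (X i))).natDegree with hd_def
  intro e
  induction e with
  | zero =>
    intro p hp hdeg
    have hdeg0 : (Phi k i p).natDegree = 0 := Nat.le_zero.1 hdeg
    have hpS : p ∈ SAlg k n (i : ℕ) := by
      rw [mem_S_iff]
      exact ⟨(Phi k i p).coeff 0, (mem_S1_iff i _).1 hp 0,
        Polynomial.eq_C_of_natDegree_eq_zero hdeg0⟩
    obtain ⟨t, _, ht⟩ := (mem_S_iff i _).1 (hm _ hpS)
    rw [ht, hdeg0, Polynomial.natDegree_C, mul_zero]
  | succ e IH =>
    intro p hp hdeg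
    rcases Nat.lt_succ_iff_lt_or_eq.1 (Nat.lt_succ_of_le hdeg) with h | he
    · exact IH p hp (Nat.lt_succ_iff.1 h)
    · -- natDegree (Phi p) = e + 1
      set f := Phi k i p with hf_def
      have hf_ne : f ≠ 0 := by
        intro h0; rw [h0, Polynomial.natDegree_zero] at he; omega
      -- decompose p = p' + cc * (X i)^(e+1)
      set p' := (Phi k i).symm f.eraseLead with hp'_def
      set cc := (Phi k i).symm (Polynomial.C f.leadingCoeff) with hcc_def
      have hsplit : p = p' + cc * X i ^ (e + 1) := by
        apply (Phi k i).injective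
        rw [map_add, map_mul, map_pow, Phi_X_self, AlgEquiv.apply_symm_apply,
          AlgEquiv.apply_symm_apply, ← he]
        exact (f.eraseLead_add_C_mul_X_pow).symm
      have hp'S : p' ∈ SAlg k n ((i : ℕ) + 1) := by
        rw [mem_S1_iff]
        intro j
        rw [AlgEquiv.apply_symm_apply, Polynomial.eraseLead_coeff]
        split
        · exact zero_mem _
        · exact (mem_S1_iff i _).1 hp j
      have hccS : cc ∈ SAlg k n (i : ℕ) := by
        rw [mem_S_iff]
        refine ⟨f.leadingCoeff, ?_, AlgEquiv.apply_symm_apply _ _⟩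
        have := (mem_S1_iff i _).1 hp f.natDegree
        rwa [← Polynomial.leadingCoeff] at this
      obtain ⟨t, _, ht⟩ := (mem_S_iff i _).1 (hm _ hccS)
      have ht_ne : t ≠ 0 := by
        rintro rfl
        rw [map_zero] at ht
        have : σ cc = 0 := (Phi k i).injective (by rw [ht, map_zero])
        have hcc0 : cc = 0 := by
          have := σ.injective (by rw [this, map_zero] : σ cc = σ 0)
          exact this
        rw [hcc_def] at hcc0
        have : Polynomial.C f.leadingCoeff = 0 := by
          have := congrArg (Phi k i) hcc0
          rwa [AlgEquiv.apply_symm_apply, map_zero] at this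
        rw [Polynomial.C_eq_zero, Polynomial.leadingCoeff_eq_zero] at this
        exact hf_ne this
      -- compute degrees
      have hg_ne : Phi k i (σ (X i)) ≠ 0 := by
        intro h0
        have : d = 0 := by rw [hd_def, h0, Polynomial.natDegree_zero]
        omega
      have hB : (Polynomial.C t * Phi k i (σ (X i)) ^ (e + 1)).natDegree = d * (e + 1) := by
        rw [Polynomial.natDegree_C_mul ht_ne, Polynomial.natDegree_pow, mul_comm]
      have hA : (Phi k i (σ p')).natDegree < d * (e + 1) := by
        have h1 : (Phi k i p').natDegree ≤ e := by
          rw [hp'_def, AlgEquiv.apply_symm_apply]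
          calc f.eraseLead.natDegree ≤ f.natDegree - 1 := f.eraseLead_natDegree_le
            _ ≤ e := by omega
        have := IH p' hp'S h1
        rw [this]
        calc d * (Phi k i p').natDegree ≤ d * e := Nat.mul_le_mul_left d h1
          _ < d * (e + 1) := mul_lt_mul_of_pos_left (Nat.lt_succ_self e) hd
      have hsum : Phi k i (σ p) = Phi k i (σ p') +
          Polynomial.C t * Phi k i (σ (X i)) ^ (e + 1) := by
        rw [hsplit, map_add, map_mul, map_pow, map_add, map_mul, map_pow, ht]
      rw [hsum, Polynomial.natDegree_add_eq_right_of_natDegree_lt (by rw [hB]; exact hA),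
        hB, ← he]

end Stmt15Aux2

namespace Stmt15Aux3
open Stmt15Aux Stmt15Aux2

variable {k : Type*} [Field k] {n : ℕ}

lemma S_top : SAlg k n n = ⊤ := by
  rw [SAlg, show {j : Fin n | (j : ℕ) < n} = Set.univ from Set.eq_univ_of_forall fun j => j.isLt]
  exact supported_univ

variable (σ : MvPolynomial (Fin n) k ≃ₐ[k] MvPolynomial (Fin n) k)

lemma hm1_gen (hτ' : ∀ m < n, ∀ q ∈ SAlg k n m, σ q ∈ SAlg k n m) {m : ℕ} (hmn : m + 1 ≤ n) :
    ∀ q ∈ SAlg k n (m + 1), σ q ∈ SAlg k n (m + 1) := by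
  rcases lt_or_eq_of_le hmn with h | h
  · exact hτ' (m + 1) h
  · intro q _
    rw [h, S_top]
    trivial

lemma surj (hτ' : ∀ m < n, ∀ q ∈ SAlg k n m, σ q ∈ SAlg k n m) :
    ∀ t m, m + t = n → ∀ q ∈ SAlg k n m, ∃ b ∈ SAlg k n m, σ b = q := by
  intro t
  induction t with
  | zero =>
    intro m hm q _
    refine ⟨σ.symm q, ?_, σ.apply_symm_apply q⟩
    rw [show m = n by omega, S_top]
    trivial
  | succ t IH =>
    intro m hmn q hq
    have hq1 : q ∈ SAlg k n (m + 1) :=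
      supported_mono (fun x hx => Nat.lt_succ_of_lt hx) hq
    obtain ⟨b, hb1, hb2⟩ := IH (m + 1) (by omega) q hq1
    set i : Fin n := ⟨m, by omega⟩ with hi_def
    have him : (i : ℕ) = m := rfl
    have hm : ∀ q' ∈ SAlg k n (i : ℕ), σ q' ∈ SAlg k n (i : ℕ) := hτ' m (by omega)
    have hm1 : ∀ q' ∈ SAlg k n ((i : ℕ) + 1), σ q' ∈ SAlg k n ((i : ℕ) + 1) :=
      hm1_gen σ hτ' (by omega)
    have hbX : ∃ b' ∈ SAlg k n ((i : ℕ) + 1), σ b' = X i :=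
      IH (m + 1) (by omega) (X i) (X_mem_supported.2 (Nat.lt_succ_self m))
    have hd := d_pos σ i hm hm1 hbX
    have hdeg := deg_mul σ i hm hm1 hd (Phi k i b).natDegree b hb1 le_rfl
    -- σ b = q ∈ S_m has natDegree 0
    obtain ⟨t', _, ht'⟩ := (mem_S_iff i q).1 hq
    rw [hb2, ht', Polynomial.natDegree_C] at hdeg
    have hb0 : (Phi k i b).natDegree = 0 := by
      rcases Nat.mul_eq_zero.1 hdeg.symm with h | h
      · omega
      · exact h
    refine ⟨b, ?_, hb2⟩
    rw [← him, mem_S_iff]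
    exact ⟨(Phi k i b).coeff 0, (mem_S1_iff i b).1 hb1 0,
      Polynomial.eq_C_of_natDegree_eq_zero hb0⟩

/-- units of the polynomial ring are nonzero constants -/
lemma unit_eq_C : ∀ m, m ≤ n → ∀ u v : MvPolynomial (Fin n) k, u ∈ SAlg k n m →
    u * v = 1 → ∃ c : k, c ≠ 0 ∧ u = C c := by
  intro m
  induction m with
  | zero =>
    intro _ u v hu huv
    have : SAlg k n 0 = ⊥ := by
      rw [SAlg, show {j : Fin n | (j : ℕ) < 0} = ∅ by simp, supported_empty]
    rw [this, Algebra.mem_bot] at hu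
    obtain ⟨c, rfl⟩ := hu
    refine ⟨c, ?_, rfl⟩
    rintro rfl
    simp only [map_zero, zero_mul] at huv
    exact zero_ne_one huv
  | succ m IH =>
    intro hmn u v hu huv
    set i : Fin n := ⟨m, by omega⟩ with hi_def
    have hunit : IsUnit (Phi k i u) := by
      refine IsUnit.of_mul_eq_one (Phi k i v) ?_
      rw [← map_mul, huv, map_one]
    have hdeg : (Phi k i u).natDegree = 0 := Polynomial.natDegree_eq_zero_of_isUnit hunit
    have huS : u ∈ SAlg k n m := by
      rw [show m = (i : ℕ) from rfl, mem_S_iff]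
      exact ⟨(Phi k i u).coeff 0, (mem_S1_iff i u).1 hu 0,
        Polynomial.eq_C_of_natDegree_eq_zero hdeg⟩
    exact IH (by omega) u v huS huv

end Stmt15Aux3

namespace Stmt15Aux4
open Stmt15Aux Stmt15Aux2 Stmt15Aux3

variable {k : Type*} [Field k] {n : ℕ}
variable (σ : MvPolynomial (Fin n) k ≃ₐ[k] MvPolynomial (Fin n) k)

/-- decomposition of an element of `S_{i+1}` of degree ≤ 1 in `X i` -/
lemma decomp {i : Fin n} {p : MvPolynomial (Fin n) k} (hp : p ∈ SAlg k n ((i : ℕ) + 1))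
    (hdeg : (Phi k i p).natDegree ≤ 1) :
    ∃ p1 ∈ SAlg k n (i : ℕ), ∃ p0 ∈ SAlg k n (i : ℕ),
      p = p1 * X i + p0 ∧ Phi k i p1 = Polynomial.C ((Phi k i p).coeff 1) ∧
        Phi k i p0 = Polynomial.C ((Phi k i p).coeff 0) := by
  set p1 := (Phi k i).symm (Polynomial.C ((Phi k i p).coeff 1)) with hp1_def
  set p0 := (Phi k i).symm (Polynomial.C ((Phi k i p).coeff 0)) with hp0_def
  have h1 : Phi k i p1 = Polynomial.C ((Phi k i p).coeff 1) := AlgEquiv.apply_symm_apply _ _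
  have h0 : Phi k i p0 = Polynomial.C ((Phi k i p).coeff 0) := AlgEquiv.apply_symm_apply _ _
  refine ⟨p1, ?_, p0, ?_, ?_, h1, h0⟩
  · exact (mem_S_iff i p1).2 ⟨_, (mem_S1_iff i p).1 hp 1, h1⟩
  · exact (mem_S_iff i p0).2 ⟨_, (mem_S1_iff i p).1 hp 0, h0⟩
  · apply (Phi k i).injective
    rw [map_add, map_mul, Phi_X_self, h1, h0]
    exact Polynomial.eq_X_add_C_of_natDegree_le_one hdeg

lemma key (hτ' : ∀ m < n, ∀ q ∈ SAlg k n m, σ q ∈ SAlg k n m) (i : Fin n) :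
    ∃ c : k, c ≠ 0 ∧ ∃ h ∈ SAlg k n (i : ℕ), σ (X i) = C c * X i + h := by
  have hm : ∀ q' ∈ SAlg k n (i : ℕ), σ q' ∈ SAlg k n (i : ℕ) := hτ' (i : ℕ) i.isLt
  have hm1 : ∀ q' ∈ SAlg k n ((i : ℕ) + 1), σ q' ∈ SAlg k n ((i : ℕ) + 1) :=
    hm1_gen σ hτ' i.isLt
  have hbX : ∃ b ∈ SAlg k n ((i : ℕ) + 1), σ b = X i :=
    surj σ hτ' (n - ((i : ℕ) + 1)) ((i : ℕ) + 1) (by omega) (X i)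
      (X_mem_supported.2 (Nat.lt_succ_self _))
  have hd := d_pos σ i hm hm1 hbX
  obtain ⟨b, hb1, hb2⟩ := hbX
  have hdeg := deg_mul σ i hm hm1 hd (Phi k i b).natDegree b hb1 le_rfl
  rw [hb2, Phi_X_self, Polynomial.natDegree_X] at hdeg
  have hd1 : (Phi k i (σ (X i))).natDegree = 1 := Nat.eq_one_of_mul_eq_one_right hdeg.symm
  have hb_deg : (Phi k i b).natDegree = 1 := Nat.eq_one_of_mul_eq_one_left hdeg.symm
  -- decompose σ (X i) and b
  have hσXS : σ (X i) ∈ SAlg k n ((i : ℕ) + 1) :=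
    hm1 _ (X_mem_supported.2 (Nat.lt_succ_self _))
  obtain ⟨g1, hg1S, g0, hg0S, hgsplit, hg1, hg0⟩ := decomp hσXS (le_of_eq hd1)
  obtain ⟨b1, hb1S, b0, hb0S, hbsplit, hB1, hB0⟩ := decomp hb1 (le_of_eq hb_deg)
  -- compute σ b = X i
  have hXeq : (σ b1 * g1) * X i + (σ b1 * g0 + σ b0) = X i := by
    calc (σ b1 * g1) * X i + (σ b1 * g0 + σ b0)
        = σ b1 * (g1 * X i + g0) + σ b0 := by ring
      _ = σ b1 * σ (X i) + σ b0 := by rw [hgsplit]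
      _ = σ (b1 * X i + b0) := by rw [map_add, map_mul]
      _ = X i := by rw [← hbsplit, hb2]
  -- apply Phi and compare coefficients of X
  obtain ⟨w', hw'T, hw'⟩ := (mem_S_iff i _).1 (mul_mem (hm _ hb1S) hg1S)
  obtain ⟨r', hr'T, hr'⟩ := (mem_S_iff i _).1 (add_mem (mul_mem (hm _ hb1S) hg0S) (hm _ hb0S))
  have hPhiX : Polynomial.C w' * Polynomial.X + Polynomial.C r' = Polynomial.X := by
    calc Polynomial.C w' * Polynomial.X + Polynomial.C r'
        = Phi k i ((σ b1 * g1) * X i + (σ b1 * g0 + σ b0)) := by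
          rw [map_add, map_mul, Phi_X_self, hw', hr']
      _ = Polynomial.X := by rw [hXeq, Phi_X_self]
  have hw1 : w' = 1 := by
    have := congrArg (fun q => Polynomial.coeff q 1) hPhiX
    simpa using this
  have hmul1 : σ b1 * g1 = 1 := by
    apply (Phi k i).injective
    rw [hw', hw1, Polynomial.C_1, map_one]
  obtain ⟨c, hc0, hc⟩ := unit_eq_C (i : ℕ) (le_of_lt i.isLt) g1 (σ b1) hg1S
    (by rw [mul_comm] at hmul1; exact hmul1)
  exact ⟨c, hc0, g0, hg0S, by rw [hgsplit, hc]⟩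

end Stmt15Aux4

open Stmt15Aux Stmt15Aux2 Stmt15Aux3 Stmt15Aux4 in
/-- let `τ, φ = (f₁,…,fₙ)` be `k`-algebra automorphisms of
`k[x₁,…,xₙ]` with `τ(Aᵢ) ⊆ Aᵢ` for `i = 1,…,n−1`, where `Aᵢ = k[f₁,…,fᵢ]`.
Then `τ(fᵢ) ∈ k^× fᵢ + A_{i−1}` for all `i`; if moreover `k` has characteristic
`p > 0` and `τ` has order `p`, then `τ(fᵢ) ∈ fᵢ + A_{i−1}` for all `i`. -/
theorem stmt15 {k : Type*} [Field k] {n : ℕ}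
    (τ φ : MvPolynomial (Fin n) k ≃ₐ[k] MvPolynomial (Fin n) k)
    (hτ : ∀ m : ℕ, m < n →
      ∀ q ∈ Algebra.adjoin k ((fun i => φ (X i)) '' {j : Fin n | (j : ℕ) < m}),
        τ q ∈ Algebra.adjoin k ((fun i => φ (X i)) '' {j : Fin n | (j : ℕ) < m})) :
    (∀ i : Fin n, ∃ (c : kˣ) (h : MvPolynomial (Fin n) k),
      h ∈ Algebra.adjoin k ((fun i => φ (X i)) '' {j : Fin n | (j : ℕ) < (i : ℕ)}) ∧
      τ (φ (X i)) = C (c : k) * φ (X i) + h) ∧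
    (∀ p : ℕ, p.Prime → CharP k p → orderOf τ = p →
      ∀ i : Fin n, ∃ h ∈ Algebra.adjoin k
          ((fun i => φ (X i)) '' {j : Fin n | (j : ℕ) < (i : ℕ)}),
        τ (φ (X i)) = φ (X i) + h) := by
  set σ := φ.trans (τ.trans φ.symm) with hσ_def
  have hσ_apply : ∀ x, σ x = φ.symm (τ (φ x)) := fun x => rfl
  have hAmap : ∀ m : ℕ, Algebra.adjoin k ((fun i => φ (X i)) '' {j : Fin n | (j : ℕ) < m})
      = Subalgebra.map φ.toAlgHom (SAlg k n m) := by
    intro m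
    rw [SAlg, supported_eq_adjoin_X, AlgHom.map_adjoin, ← Set.image_comp]
    rfl
  have hτ' : ∀ m < n, ∀ q ∈ SAlg k n m, σ q ∈ SAlg k n m := by
    intro m hmn q hq
    have h1 : τ (φ q) ∈ Subalgebra.map φ.toAlgHom (SAlg k n m) := by
      rw [← hAmap]
      exact hτ m hmn _ (by rw [hAmap]; exact ⟨q, hq, rfl⟩)
    obtain ⟨s, hs, hseq⟩ := h1
    have : σ q = s := by
      rw [hσ_apply, ← hseq]
      exact φ.symm_apply_apply s
    rw [this]; exact hs
  have hφC : ∀ c : k, φ (C c) = C c := by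
    intro c
    have h1 : (C c : MvPolynomial (Fin n) k) = algebraMap k _ c := by
      rw [MvPolynomial.algebraMap_eq]
    rw [h1, AlgEquiv.commutes]
  -- part 1
  have part1 : ∀ i : Fin n, ∃ (c : kˣ) (h : MvPolynomial (Fin n) k),
      h ∈ Algebra.adjoin k ((fun i => φ (X i)) '' {j : Fin n | (j : ℕ) < (i : ℕ)}) ∧
      τ (φ (X i)) = C (c : k) * φ (X i) + h := by
    intro i
    obtain ⟨c, hc0, h, hhS, hkey⟩ := key σ hτ' i
    refine ⟨Units.mk0 c hc0, φ h, ?_, ?_⟩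
    · rw [hAmap]; exact ⟨h, hhS, rfl⟩
    · have h1 : τ (φ (X i)) = φ (σ (X i)) := by
        rw [hσ_apply, AlgEquiv.apply_symm_apply]
      rw [h1, hkey, map_add, map_mul, hφC]
      rfl
  refine ⟨part1, ?_⟩
  -- part 2
  intro p hp hchar horder i
  haveI := Fact.mk hp
  haveI := hchar
  obtain ⟨c, h, hhA, hkey⟩ := part1 i
  set A := Algebra.adjoin k ((fun i => φ (X i)) '' {j : Fin n | (j : ℕ) < (i : ℕ)}) with hA_def
  have hτA : ∀ q ∈ A, τ q ∈ A := hτ (i : ℕ) i.isLt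
  have iter : ∀ j : ℕ, ∃ hj ∈ A, (τ ^ j) (φ (X i)) = C ((c : k) ^ j) * φ (X i) + hj := by
    intro j
    induction j with
    | zero =>
      refine ⟨0, zero_mem _, ?_⟩
      simp
    | succ j IH =>
      obtain ⟨hj, hhj, hIH⟩ := IH
      refine ⟨C ((c : k) ^ j) * h + τ hj, ?_, ?_⟩
      · refine add_mem ?_ (hτA _ hhj)
        have : (C ((c : k) ^ j) : MvPolynomial (Fin n) k) * h = ((c : k) ^ j) • h := by
          rw [MvPolynomial.smul_eq_C_mul]
        rw [this]
        exact Subalgebra.smul_mem _ hhA _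
      · have h1 : (τ ^ (j + 1)) (φ (X i)) = τ ((τ ^ j) (φ (X i))) := by
          rw [pow_succ' τ j]
          rfl
        rw [h1, hIH, map_add, map_mul]
        have hτC : τ (C ((c : k) ^ j)) = C ((c : k) ^ j) := by
          have : (C ((c : k) ^ j) : MvPolynomial (Fin n) k) = algebraMap k _ ((c : k) ^ j) := by
            rw [MvPolynomial.algebraMap_eq]
          rw [this, AlgEquiv.commutes]
        rw [hτC, hkey, pow_succ, map_mul]
        ring
  obtain ⟨hP, hhP, hiter⟩ := iter p
  have hτp : τ ^ p = 1 := by rw [← horder]; exact pow_orderOf_eq_one τ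
  have hXimem : (φ (X i)) ∉ A := by
    intro hmem
    rw [hA_def, hAmap] at hmem
    obtain ⟨s, hs, hseq⟩ := hmem
    have : s = X i := φ.injective hseq
    rw [this] at hs
    exact X_not_mem_S i hs
  have hcp : (c : k) ^ p = 1 := by
    by_contra hne
    have h1 : φ (X i) = C ((c : k) ^ p) * φ (X i) + hP := by
      rw [← hiter, hτp]; rfl
    have h2 : C (1 - (c : k) ^ p) * φ (X i) = hP := by
      rw [map_sub, sub_mul, map_one, one_mul]
      nth_rewrite 1 [h1]
      ring
    have h3 : φ (X i) = C (1 - (c : k) ^ p)⁻¹ * hP := by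
      rw [← h2, ← mul_assoc, ← map_mul, inv_mul_cancel₀ (by
        intro h0
        apply hne
        have := sub_eq_zero.1 h0
        exact this.symm), map_one, one_mul]
    apply hXimem
    rw [h3, show (C (1 - (c : k) ^ p)⁻¹ : MvPolynomial (Fin n) k) * hP
      = ((1 - (c : k) ^ p)⁻¹) • hP from (MvPolynomial.smul_eq_C_mul _ _).symm]
    exact Subalgebra.smul_mem _ hhP _
  have hc1 : (c : k) = 1 := by
    have h1 : ((c : k) - 1) ^ p = 0 := by
      rw [sub_pow_char, hcp, one_pow, sub_self]
    have h2 := pow_eq_zero_iff hp.ne_zero |>.1 h1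
    exact sub_eq_zero.1 h2
  refine ⟨h, hhA, ?_⟩
  rw [hkey, hc1, map_one, one_mul]
end

section
/- Let k be a field of characteristic p > 0 and let ε' be the k-algebra automorphism of k[x,y] with ε'(x) = x + f(y), ε'(y) = y, where f(y) ∈ k[y] \ k. Then the centralizer C(ε') := {φ ∈ Aut_k k[x,y] : φε' = ε'φ} equals { (a x + g, b y + c) : a, b ∈ k^×, c ∈ k, g ∈ k[y], and a·f(y) = f(b y + c) }. -/
open MvPolynomial

noncomputable section Stmt16Aux

variable {k : Type*} [Field k]

/-- `k[x,y] ≅ (k[y])[x]`, with `X 0 ↦ X` (outer) and `X 1 ↦ C X`. -/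
def EE (k : Type*) [Field k] : MvPolynomial (Fin 2) k ≃ₐ[k] Polynomial (Polynomial k) :=
  (MvPolynomial.finSuccEquiv k 1).trans <| Polynomial.mapAlgEquiv <|
    (MvPolynomial.finSuccEquiv k 0).trans <| Polynomial.mapAlgEquiv <|
      MvPolynomial.isEmptyAlgEquiv k (Fin 0)

lemma EE_X0 : EE k (X 0) = Polynomial.X := by
  simp [EE, MvPolynomial.finSuccEquiv_X_zero, Polynomial.coe_mapAlgEquiv]

lemma EE_X1 : EE k (X 1) = Polynomial.C Polynomial.X := by
  have h1 : (X 1 : MvPolynomial (Fin 2) k) = X (Fin.succ 0) := rfl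
  simp [EE, h1, MvPolynomial.finSuccEquiv_X_succ, Polynomial.coe_mapAlgEquiv,
    MvPolynomial.finSuccEquiv_X_zero]

lemma EE_C (a : k) : EE k (C a) = Polynomial.C (Polynomial.C a) := by
  rw [← MvPolynomial.algebraMap_eq, AlgEquiv.commutes, Polynomial.algebraMap_apply,
    Polynomial.algebraMap_eq]

lemma EE_aeval (g : Polynomial k) :
    EE k (Polynomial.aeval (X 1 : MvPolynomial (Fin 2) k) g) = Polynomial.C g := by
  rw [← Polynomial.aeval_algHom_apply, EE_X1]
  have : (Polynomial.C Polynomial.X : Polynomial (Polynomial k))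
      = Polynomial.CAlgHom (R := k) (Polynomial.X : Polynomial k) := rfl
  rw [this, Polynomial.aeval_algHom_apply, Polynomial.aeval_X_left_apply]
  rfl

lemma isUnit_MvP {w : MvPolynomial (Fin 2) k} (h : IsUnit w) :
    ∃ u : k, u ≠ 0 ∧ w = C u := by
  have h1 : IsUnit (EE k w) := h.map (EE k)
  obtain ⟨r, hr, hrw⟩ := Polynomial.isUnit_iff.mp h1
  obtain ⟨u, hu, hur⟩ := Polynomial.isUnit_iff.mp hr
  refine ⟨u, hu.ne_zero, ?_⟩
  apply (EE k).injective
  rw [EE_C, ← hrw, ← hur]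

open Polynomial in
lemma dvd_natDegree_of_fixed (p : ℕ) [Fact p.Prime] [CharP k p]
    {t : Polynomial k} (ht : t ≠ 0) {W : Polynomial (Polynomial k)}
    (hW : W.comp (Polynomial.X + Polynomial.C t) = W) (hd : W.natDegree ≠ 0) :
    p ∣ W.natDegree := by
  obtain ⟨m, hm⟩ : ∃ m, W.natDegree = m + 1 :=
    ⟨W.natDegree - 1, (Nat.succ_pred_eq_of_pos (Nat.pos_of_ne_zero hd)).symm⟩
  have hWne : W ≠ 0 := fun h => hd (by simp [h])
  have hcoeff : (W.comp (Polynomial.X + Polynomial.C t)).coeff m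
      = ∑ e ∈ Finset.range (m + 2),
          W.coeff e * (t ^ (e - m) * (e.choose m : Polynomial k)) := by
    rw [comp_eq_sum_left, Polynomial.sum_def, finset_sum_coeff]
    rw [Finset.sum_subset (supp_subset_range (by omega : W.natDegree < m + 2))]
    · exact Finset.sum_congr rfl fun e _ => by rw [Polynomial.coeff_C_mul, coeff_X_add_C_pow]
    · intro e _ he
      simp [Polynomial.notMem_support_iff.mp he]
  rw [hW] at hcoeff
  rw [Finset.sum_range_succ, Finset.sum_range_succ,
    Finset.sum_eq_zero (fun e he => by
      rw [Nat.choose_eq_zero_of_lt (Finset.mem_range.mp he), Nat.cast_zero, mul_zero,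
        mul_zero]),
    zero_add, Nat.sub_self, pow_zero, Nat.choose_self, Nat.cast_one, mul_one,
    Nat.add_sub_cancel_left, pow_one, Nat.choose_succ_self_right] at hcoeff
  have h0 : W.coeff (m + 1) * (t * ((m + 1 : ℕ) : Polynomial k)) = 0 := by
    linear_combination -hcoeff
  have hlc : W.coeff (m + 1) ≠ 0 := by
    rw [← hm, Polynomial.coeff_natDegree]
    exact leadingCoeff_ne_zero.mpr hWne
  have h1 : ((m + 1 : ℕ) : Polynomial k) = 0 := by
    rcases mul_eq_zero.mp h0 with h | h
    · exact absurd h hlc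
    · rcases mul_eq_zero.mp h with h | h
      · exact absurd h ht
      · exact h
  have h2 : ((m + 1 : ℕ) : k) = 0 := by
    have := h1
    rwa [← Polynomial.C_eq_natCast, Polynomial.C_eq_zero] at this
  rw [hm]
  exact (CharP.cast_eq_zero_iff k p (m + 1)).mp h2

lemma aeval_self_comp {R : Type*} [CommSemiring R] (q W : Polynomial R) :
    Polynomial.aeval q W = W.comp q := by
  rw [Polynomial.aeval_def, Polynomial.comp, Polynomial.algebraMap_eq]

lemma EE_eps (f : Polynomial k)
    (ε : MvPolynomial (Fin 2) k ≃ₐ[k] MvPolynomial (Fin 2) k)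
    (hε0 : ε (X 0) = X 0 + Polynomial.aeval (X 1 : MvPolynomial (Fin 2) k) f)
    (hε1 : ε (X 1) = X 1) (W : MvPolynomial (Fin 2) k) :
    EE k (ε W) = (EE k W).comp (Polynomial.X + Polynomial.C f) := by
  have key : (EE k).toAlgHom.comp ε.toAlgHom
      = (((Polynomial.aeval (Polynomial.X + Polynomial.C f) :
            Polynomial (Polynomial k) →ₐ[Polynomial k] Polynomial (Polynomial k))).restrictScalars
          k).comp (EE k).toAlgHom := by
    apply MvPolynomial.algHom_ext
    intro i
    fin_cases i <;>
      [(rw [show (⟨0, by norm_num⟩ : Fin 2) = 0 from rfl]);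
       (rw [show (⟨1, by norm_num⟩ : Fin 2) = 1 from rfl])]
    · simp only [AlgHom.coe_comp, AlgEquiv.toAlgHom_eq_coe, AlgEquiv.coe_toAlgHom, AlgHom.coe_coe,
        Function.comp_apply, AlgHom.coe_restrictScalars']
      rw [hε0, map_add, EE_X0, EE_aeval, Polynomial.aeval_X]
    · simp only [AlgHom.coe_comp, AlgEquiv.toAlgHom_eq_coe, AlgEquiv.coe_toAlgHom, AlgHom.coe_coe,
        Function.comp_apply, AlgHom.coe_restrictScalars']
      rw [hε1, EE_X1]
      rw [show (Polynomial.C Polynomial.X : Polynomial (Polynomial k))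
            = algebraMap (Polynomial k) (Polynomial (Polynomial k)) Polynomial.X by
          rw [Polynomial.algebraMap_eq]]
      rw [AlgHom.commutes]
  have := DFunLike.congr_fun key W
  simp only [AlgHom.coe_comp, AlgEquiv.toAlgHom_eq_coe, AlgEquiv.coe_toAlgHom, AlgHom.coe_coe, Function.comp_apply,
    AlgHom.coe_restrictScalars'] at this
  rw [this, aeval_self_comp]

lemma EE_phi (φ : MvPolynomial (Fin 2) k ≃ₐ[k] MvPolynomial (Fin 2) k) {b c : k}
    (hQ : φ (X 1) = C b * X 1 + C c) (W : MvPolynomial (Fin 2) k) :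
    EE k (φ W) = ((EE k W).map
        ((Polynomial.aeval (Polynomial.C b * Polynomial.X + Polynomial.C c) :
          Polynomial k →ₐ[k] Polynomial k) : Polynomial k →+* Polynomial k)).comp
      (EE k (φ (X 0))) := by
  set compy : Polynomial k →ₐ[k] Polynomial k :=
    Polynomial.aeval (Polynomial.C b * Polynomial.X + Polynomial.C c) with hcompy
  set PX : Polynomial (Polynomial k) := EE k (φ (X 0)) with hPX
  have key : (EE k).toAlgHom.comp φ.toAlgHom
      = (((Polynomial.aeval PX :
            Polynomial (Polynomial k) →ₐ[Polynomial k] Polynomial (Polynomial k))).restrictScalars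
          k).comp ((Polynomial.mapAlgHom compy).comp (EE k).toAlgHom) := by
    apply MvPolynomial.algHom_ext
    intro i
    fin_cases i <;>
      [(rw [show (⟨0, by norm_num⟩ : Fin 2) = 0 from rfl]);
       (rw [show (⟨1, by norm_num⟩ : Fin 2) = 1 from rfl])] <;>
      simp only [AlgHom.coe_comp, AlgEquiv.toAlgHom_eq_coe, AlgEquiv.coe_toAlgHom, AlgHom.coe_coe,
        Function.comp_apply, AlgHom.coe_restrictScalars', Polynomial.coe_mapAlgHom]
    · rw [EE_X0, Polynomial.map_X, Polynomial.aeval_X]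
    · rw [hQ, map_add, map_mul, EE_C, EE_X1, EE_C, Polynomial.map_C, Polynomial.aeval_C,
        Polynomial.algebraMap_eq, RingHom.coe_coe, hcompy, Polynomial.aeval_X,
        map_add, map_mul]
  have := DFunLike.congr_fun key W
  simp only [AlgHom.coe_comp, AlgEquiv.toAlgHom_eq_coe, AlgEquiv.coe_toAlgHom, AlgHom.coe_coe, Function.comp_apply,
    AlgHom.coe_restrictScalars', Polynomial.coe_mapAlgHom] at this
  rw [this, aeval_self_comp]

lemma aeval_eq_map_comp (f : Polynomial k) (Q : Polynomial (Polynomial k)) :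
    Polynomial.aeval Q f
      = (f.map (Polynomial.C : k →+* Polynomial k)).comp Q := by
  rw [Polynomial.comp, Polynomial.eval₂_map, Polynomial.aeval_def]
  congr 1

lemma compy_injective {b : k} (hb : b ≠ 0) (c : k) :
    Function.Injective
      (Polynomial.aeval (Polynomial.C b * Polynomial.X + Polynomial.C c) :
        Polynomial k →ₐ[k] Polynomial k) := by
  have key : ((Polynomial.aeval (Polynomial.C b⁻¹ * Polynomial.X + Polynomial.C (-(b⁻¹ * c))) :
        Polynomial k →ₐ[k] Polynomial k).comp
      (Polynomial.aeval (Polynomial.C b * Polynomial.X + Polynomial.C c) :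
        Polynomial k →ₐ[k] Polynomial k)) = AlgHom.id k (Polynomial k) := by
    apply Polynomial.algHom_ext
    simp only [AlgHom.coe_comp, Function.comp_apply, Polynomial.aeval_X, map_add, map_mul,
      Polynomial.aeval_C, Polynomial.algebraMap_eq, AlgHom.coe_id, id_eq]
    rw [mul_add, ← mul_assoc, ← Polynomial.C_mul, mul_inv_cancel₀ hb, Polynomial.C_1, one_mul,
      ← Polynomial.C_mul, add_assoc, ← Polynomial.C_add,
      show b * -(b⁻¹ * c) + c = 0 by field_simp; ring, Polynomial.C_0, add_zero]
  intro x y h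
  have hx := DFunLike.congr_fun key x
  have hy := DFunLike.congr_fun key y
  simp only [AlgHom.coe_comp, Function.comp_apply, AlgHom.coe_id, id_eq] at hx hy
  rw [← hx, ← hy, h]

end Stmt16Aux

/-- centralizer of the elementary automorphism
`ε' = (x + f(y), y)` of `k[x,y]`, `f(y) ∈ k[y] \ k`, over a field `k` of
characteristic `p > 0`:
`C(ε') = {(a x + g(y), b y + c) : a, b ∈ k^×, c ∈ k, g ∈ k[y], a f(y) = f(by + c)}`. -/
theorem stmt16 {k : Type*} [Field k] (p : ℕ) [Fact p.Prime] [CharP k p]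
    (f : Polynomial k) (hf : f.natDegree ≠ 0)
    (ε : MvPolynomial (Fin 2) k ≃ₐ[k] MvPolynomial (Fin 2) k)
    (hε0 : ε (X 0) = X 0 + Polynomial.aeval (X 1 : MvPolynomial (Fin 2) k) f)
    (hε1 : ε (X 1) = X 1) :
    ∀ φ : MvPolynomial (Fin 2) k ≃ₐ[k] MvPolynomial (Fin 2) k,
      (∀ q, φ (ε q) = ε (φ q)) ↔
      ∃ (a b : kˣ) (c : k) (g : Polynomial k),
        φ (X 0) = C (a : k) * X 0 + Polynomial.aeval (X 1 : MvPolynomial (Fin 2) k) g ∧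
        φ (X 1) = C (b : k) * X 1 + C c ∧
        Polynomial.C (a : k) * f
          = f.comp (Polynomial.C (b : k) * Polynomial.X + Polynomial.C c) := by
  classical
  intro φ
  set fh : MvPolynomial (Fin 2) k := Polynomial.aeval (X 1) f with hfhdef
  have hfne : f ≠ 0 := fun h => hf (by rw [h, Polynomial.natDegree_zero])
  have hfh0 : fh ≠ 0 := by
    intro h
    apply hfne
    have h2 := congrArg (EE k) h
    rw [hfhdef, EE_aeval, map_zero, Polynomial.C_eq_zero] at h2
    exact h2
  have hCfix : ∀ (ψ : MvPolynomial (Fin 2) k ≃ₐ[k] MvPolynomial (Fin 2) k) (r : k),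
      ψ (C r) = C r := fun ψ r => by
    rw [← MvPolynomial.algebraMap_eq]; exact ψ.commutes r
  have hdvd : ∀ W, fh ∣ ε W - W := by
    intro W
    have key : (Ideal.Quotient.mkₐ k (Ideal.span {fh})).comp ε.toAlgHom
        = Ideal.Quotient.mkₐ k (Ideal.span {fh}) := by
      apply MvPolynomial.algHom_ext
      intro i
      fin_cases i <;>
        [(rw [show (⟨0, by norm_num⟩ : Fin 2) = 0 from rfl]);
         (rw [show (⟨1, by norm_num⟩ : Fin 2) = 1 from rfl])] <;>
        simp only [AlgHom.coe_comp, AlgEquiv.toAlgHom_eq_coe, AlgEquiv.coe_toAlgHom, AlgHom.coe_coe,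
          Function.comp_apply]
      · rw [hε0, map_add]
        have hmem : (Ideal.Quotient.mkₐ k (Ideal.span {fh})) fh = 0 := by
          rw [Ideal.Quotient.mkₐ_eq_mk, Ideal.Quotient.eq_zero_iff_mem]
          exact Ideal.mem_span_singleton_self fh
        rw [hmem, add_zero]
      · rw [hε1]
    have h2 := DFunLike.congr_fun key W
    simp only [AlgHom.coe_comp, AlgEquiv.toAlgHom_eq_coe, AlgEquiv.coe_toAlgHom, AlgHom.coe_coe,
      Function.comp_apply] at h2
    rw [← Ideal.mem_span_singleton, ← Ideal.Quotient.eq_zero_iff_mem, map_sub]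
    rw [Ideal.Quotient.mkₐ_eq_mk] at h2
    rw [h2, sub_self]
  constructor
  · intro hcomm
    have hcomm' : ∀ q, φ.symm (ε q) = ε (φ.symm q) := by
      intro q
      apply φ.injective
      rw [AlgEquiv.apply_symm_apply, hcomm (φ.symm q), AlgEquiv.apply_symm_apply]
    have hphif : φ fh = ε (φ (X 0)) - φ (X 0) := by
      have h1 : ε (X 0) - X 0 = fh := by rw [hε0]; ring
      rw [← h1, map_sub, hcomm]
    have hphif' : φ.symm fh = ε (φ.symm (X 0)) - φ.symm (X 0) := by
      have h1 : ε (X 0) - X 0 = fh := by rw [hε0]; ring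
      rw [← h1, map_sub, hcomm']
    obtain ⟨t, ht⟩ : fh ∣ φ fh := hphif ▸ hdvd (φ (X 0))
    obtain ⟨s, hs⟩ : fh ∣ φ.symm fh := hphif' ▸ hdvd (φ.symm (X 0))
    have hts : t * φ s = 1 := by
      have h1 : φ (φ.symm fh) = fh := φ.apply_symm_apply fh
      rw [hs, map_mul, ht] at h1
      apply mul_left_cancel₀ hfh0
      rw [← mul_assoc, mul_one]
      exact h1
    have hunit_t : IsUnit t := IsUnit.of_mul_eq_one _ hts
    have hunit_s : IsUnit s := by
      have h1 : IsUnit (φ s) := IsUnit.of_mul_eq_one _ ((mul_comm t (φ s)) ▸ hts)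
      have h2 := h1.map φ.symm
      rwa [AlgEquiv.symm_apply_apply] at h2
    obtain ⟨u, hu0, hut⟩ := isUnit_MvP hunit_t
    obtain ⟨u', hu'0, hus⟩ := isUnit_MvP hunit_s
    have hphifh : φ fh = C u * fh := by rw [ht, hut]; ring
    have hphifh' : φ.symm fh = C u' * fh := by rw [hs, hus]; ring
    -- Q has the form b y + c
    have hQ1 : Polynomial.aeval (φ (X 1)) f = C u * fh := by
      rw [← hphifh, hfhdef, Polynomial.aeval_algHom_apply]
    have hQB : Polynomial.aeval (EE k (φ (X 1))) f
        = Polynomial.C (Polynomial.C u * f) := by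
      have h2 := congrArg (EE k) hQ1
      rw [← Polynomial.aeval_algHom_apply] at h2
      rw [h2, map_mul, EE_C, hfhdef, EE_aeval, ← Polynomial.C_mul]
    have hdegQB : (EE k (φ (X 1))).natDegree = 0 := by
      have h2 := congrArg Polynomial.natDegree hQB
      rw [aeval_eq_map_comp, Polynomial.natDegree_comp,
        Polynomial.natDegree_map_eq_of_injective Polynomial.C_injective,
        Polynomial.natDegree_C] at h2
      exact (Nat.mul_eq_zero.mp h2).resolve_left hf
    set qy : Polynomial k := (EE k (φ (X 1))).coeff 0 with hqydef
    have hQBC : EE k (φ (X 1)) = Polynomial.C qy :=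
      Polynomial.eq_C_of_natDegree_eq_zero hdegQB
    have hqy : Polynomial.aeval qy f = Polynomial.C u * f := by
      rw [hQBC] at hQB
      have h3 : (Polynomial.C qy : Polynomial (Polynomial k))
          = Polynomial.CAlgHom (R := k) qy := rfl
      rw [h3, Polynomial.aeval_algHom_apply] at hQB
      exact Polynomial.C_injective hQB
    have hfcomp : f.comp qy = Polynomial.C u * f := by
      rw [← aeval_self_comp]; exact hqy
    have hdegqy : qy.natDegree = 1 := by
      have h3 := congrArg Polynomial.natDegree hfcomp
      rw [Polynomial.natDegree_comp, Polynomial.natDegree_C_mul hu0] at h3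
      exact Nat.eq_of_mul_eq_mul_left (Nat.pos_of_ne_zero hf) (h3.trans (mul_one _).symm)
    set b : k := qy.coeff 1 with hbdef
    set c : k := qy.coeff 0 with hcdef
    have hqyne : qy ≠ 0 := fun h => by simp [h] at hdegqy
    have hb0 : b ≠ 0 := by
      rw [hbdef, show (1 : ℕ) = qy.natDegree from hdegqy.symm, Polynomial.coeff_natDegree]
      exact Polynomial.leadingCoeff_ne_zero.mpr hqyne
    have hqyform : qy = Polynomial.C b * Polynomial.X + Polynomial.C c :=
      Polynomial.eq_X_add_C_of_natDegree_le_one (le_of_eq hdegqy)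
    have hphiX1 : φ (X 1) = C b * X 1 + C c := by
      apply (EE k).injective
      rw [hQBC, map_add, map_mul, EE_C, EE_X1, EE_C, hqyform, map_add, map_mul]
    have hcompid : Polynomial.C u * f
        = f.comp (Polynomial.C b * Polynomial.X + Polynomial.C c) := by
      rw [← hqyform, hfcomp]
    -- the "x"-components, after removing the linear part, are fixed by ε
    set p0 : MvPolynomial (Fin 2) k := φ (X 0) - C u * X 0 with hp0def
    set p0' : MvPolynomial (Fin 2) k := φ.symm (X 0) - C u' * X 0 with hp0'def
    have hfix : ε p0 = p0 := by
      rw [hp0def, map_sub, map_mul, hCfix ε, hε0]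
      have h4 : ε (φ (X 0)) = φ (X 0) + C u * fh := by
        rw [← hphifh]; linear_combination -hphif
      rw [h4]; ring
    have hfix' : ε p0' = p0' := by
      rw [hp0'def, map_sub, map_mul, hCfix ε, hε0]
      have h4 : ε (φ.symm (X 0)) = φ.symm (X 0) + C u' * fh := by
        rw [← hphifh']; linear_combination -hphif'
      rw [h4]; ring
    have e1 : φ p0' = X 0 - C u' * φ (X 0) := by
      rw [hp0'def, map_sub, map_mul, hCfix φ, AlgEquiv.apply_symm_apply]
    have hW : C u' * p0 + φ p0' = X 0 - C (u' * u) * X 0 := by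
      rw [e1, hp0def, MvPolynomial.C_mul]
      ring
    have hWfix : ε (C u' * p0 + φ p0') = C u' * p0 + φ p0' := by
      rw [map_add, map_mul, hCfix ε, hfix, ← hcomm, hfix']
    have h5 : ε (X 0 - C (u' * u) * X 0) = X 0 - C (u' * u) * X 0 := by
      rw [← hW]; exact hWfix
    rw [map_sub, map_mul, hCfix ε, hε0] at h5
    have h6 : (1 - MvPolynomial.C (u' * u)) * fh = 0 := by linear_combination h5
    have huu : u' * u = 1 := by
      rcases mul_eq_zero.mp h6 with h | h
      · have h9 : MvPolynomial.C (u' * u) = (MvPolynomial.C (1 : k) :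
            MvPolynomial (Fin 2) k) := by
          rw [MvPolynomial.C_1]; linear_combination -h
        exact (MvPolynomial.C_injective (Fin 2) k h9).symm ▸ rfl
      · exact absurd h hfh0
    have hrel : φ p0' = -(C u' * p0) := by
      have h10 := hW
      rw [huu, MvPolynomial.C_1, one_mul, sub_self] at h10
      linear_combination h10
    -- transport to (k[y])[x]
    have h7 : (EE k p0).comp (Polynomial.X + Polynomial.C f) = EE k p0 := by
      rw [← EE_eps f ε hε0 hε1 p0, hfix]
    have h7' : (EE k p0').comp (Polynomial.X + Polynomial.C f) = EE k p0' := by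
      rw [← EE_eps f ε hε0 hε1 p0', hfix']
    have hrelB : ((EE k p0').map
          ((Polynomial.aeval (Polynomial.C b * Polynomial.X + Polynomial.C c) :
            Polynomial k →ₐ[k] Polynomial k) : Polynomial k →+* Polynomial k)).comp
          (EE k (φ (X 0)))
        = -(Polynomial.C (Polynomial.C u') * EE k p0) := by
      have h8 := congrArg (EE k) hrel
      rw [EE_phi φ hphiX1 p0'] at h8
      rw [h8, map_neg, map_mul, EE_C]
    by_cases hD : (EE k p0).natDegree = 0
    · refine ⟨Units.mk0 u hu0, Units.mk0 b hb0, c, (EE k p0).coeff 0, ?_, ?_, ?_⟩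
      · have h9 : p0 = Polynomial.aeval (X 1 : MvPolynomial (Fin 2) k)
            ((EE k p0).coeff 0) := by
          apply (EE k).injective
          rw [EE_aeval]
          exact Polynomial.eq_C_of_natDegree_eq_zero hD
        have h10 : φ (X 0) = C u * X 0 + p0 := by rw [hp0def]; ring
        rw [Units.val_mk0, h10]
        congr 1
      · rw [Units.val_mk0]; exact hphiX1
      · rw [Units.val_mk0, Units.val_mk0]; exact hcompid
    · exfalso
      have hpD : p ∣ (EE k p0).natDegree := dvd_natDegree_of_fixed p hfne h7 hD
      have hp2 : 2 ≤ p := (Fact.out : p.Prime).two_le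
      have hD2 : 2 ≤ (EE k p0).natDegree := by
        have := Nat.le_of_dvd (Nat.pos_of_ne_zero hD) hpD
        omega
      have hPX : EE k (φ (X 0)) = Polynomial.C (Polynomial.C u) * Polynomial.X + EE k p0 := by
        rw [hp0def, map_sub, map_mul, EE_C, EE_X0]; ring
      have hCu_ne : (Polynomial.C u : Polynomial k) ≠ 0 := by simpa using hu0
      have hCu'_ne : (Polynomial.C u' : Polynomial k) ≠ 0 := by simpa using hu'0
      have hdegPX : (EE k (φ (X 0))).natDegree = (EE k p0).natDegree := by
        rw [hPX, Polynomial.natDegree_add_eq_right_of_natDegree_lt]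
        rw [Polynomial.natDegree_C_mul hCu_ne, Polynomial.natDegree_X]; omega
      have hinj : Function.Injective
          ((Polynomial.aeval (Polynomial.C b * Polynomial.X + Polynomial.C c) :
            Polynomial k →ₐ[k] Polynomial k) : Polynomial k →+* Polynomial k) :=
        compy_injective hb0 c
      have hdegL := congrArg Polynomial.natDegree hrelB
      rw [Polynomial.natDegree_comp, Polynomial.natDegree_neg,
        Polynomial.natDegree_C_mul hCu'_ne, hdegPX,
        Polynomial.natDegree_map_eq_of_injective hinj] at hdegL
      have hM1 : (EE k p0').natDegree = 1 :=
        Nat.eq_of_mul_eq_mul_right (Nat.pos_of_ne_zero hD) (hdegL.trans (one_mul _).symm)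
      have hM0 : (EE k p0').natDegree ≠ 0 := by rw [hM1]; omega
      have hdvd1 := dvd_natDegree_of_fixed p hfne h7' hM0
      rw [hM1] at hdvd1
      have := Nat.le_of_dvd one_pos hdvd1
      omega

  · rintro ⟨a, b, c, g, h0, h1, hcomp⟩
    have hkey : Polynomial.aeval (C (b : k) * X 1 + C c : MvPolynomial (Fin 2) k) f
        = C (a : k) * fh := by
      have h2 := congrArg (Polynomial.aeval (X 1 : MvPolynomial (Fin 2) k)) hcomp
      rw [Polynomial.aeval_comp, map_mul, Polynomial.aeval_C, MvPolynomial.algebraMap_eq] at h2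
      have hinner : (Polynomial.aeval (X 1 : MvPolynomial (Fin 2) k))
          (Polynomial.C (b : k) * Polynomial.X + Polynomial.C c) = C (b : k) * X 1 + C c := by
        rw [map_add, map_mul, Polynomial.aeval_X, Polynomial.aeval_C, Polynomial.aeval_C]
        rfl
      rw [hinner] at h2
      exact h2.symm
    have hφfh : φ fh = C (a : k) * fh := by
      rw [hfhdef, ← Polynomial.aeval_algHom_apply, h1, hkey]
    have hεg : ε ((Polynomial.aeval (X 1 : MvPolynomial (Fin 2) k)) g)
        = (Polynomial.aeval (X 1 : MvPolynomial (Fin 2) k)) g := by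
      rw [← Polynomial.aeval_algHom_apply, hε1]
    have key : φ.toAlgHom.comp ε.toAlgHom = ε.toAlgHom.comp φ.toAlgHom := by
      apply MvPolynomial.algHom_ext
      intro i
      fin_cases i <;>
        [(rw [show (⟨0, by norm_num⟩ : Fin 2) = 0 from rfl]);
         (rw [show (⟨1, by norm_num⟩ : Fin 2) = 1 from rfl])] <;>
        simp only [AlgHom.coe_comp, AlgEquiv.toAlgHom_eq_coe, AlgEquiv.coe_toAlgHom, AlgHom.coe_coe,
          Function.comp_apply]
      · rw [hε0, map_add, h0, hφfh, map_add, map_mul, hCfix ε, hε0, hεg]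
        ring
      · rw [hε1, h1, map_add, map_mul, hCfix ε, hε1, hCfix ε]
    exact fun q => DFunLike.congr_fun key q
end
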